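/- arXiv:2001.02735 — 5 statements merged into one kernel-verified Lean document; each statement's English description precedes it below -/
import Mathlib

section
/- Let δ < 0 and a := (1−δ)/2, let b : [0,∞) → ℝ be a continuous function, let s ≥ 0 and let z belong to the open upper half-plane ℍ := {w ∈ ℂ : Im w > 0}. Then there exists a unique continuous function H : [s,∞) → ℂ satisfying H_t = z + (b_t − b_s) − a ∫_s^t (1/H_r) dr for all t ≥ s; moreover H_t ∈ ℍ for all t ≥ s and the function t ↦ Im H_t is strictly increasing on [s,∞). -/
/-!
Write the equation as `H = z + β + ∫ g ∘ H` with `β t = b t - b s` real and `g w = -a / w`.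
Since `Im (g w) = a Im w / |w|² > 0` on `ℍ`, `Im H` increases as long as `H` stays in `ℍ`, and a
continuity argument shows that every solution satisfies `Im H ≥ Im z`. On the half-plane
`{Im w ≥ Im z}` the drift `g` is bounded and Lipschitz; composing it with the retraction
`w ↦ Re w + i max (Im w) (Im z)` onto that half-plane gives a globally Lipschitz, bounded equation,
which Picard–Lindelöf on every `[s, T]` and Grönwall uniqueness solve uniquely on `[s, ∞)`. Every
solution of either equation stays where the two equations agree, so they have the same solutions.
-/

open MeasureTheory Set

noncomputable section

/-- `H` is a continuous solution on `[s,∞)` of the integrated complex Bessel equation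
`H_t = z + (b_t − b_s) − a ∫_s^t (1/H_r) dr`. -/
def IsCBesselFlow (a : ℝ) (b : ℝ → ℝ) (s : ℝ) (z : ℂ) (H : ℝ → ℂ) : Prop :=
  ContinuousOn H (Set.Ici s) ∧
    ∀ t ∈ Set.Ici s, H t = z + ((b t : ℂ) - (b s : ℂ)) - (a : ℂ) * ∫ r in s..t, (H r)⁻¹

open Filter Topology intervalIntegral
open scoped NNReal

lemma LipschitzWith.comp_add_right {E F : Type*} [SeminormedAddCommGroup E] [PseudoEMetricSpace F]
    {K : ℝ≥0} {g : E → F} (hg : LipschitzWith K g) (c : E) :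
    LipschitzWith K fun x => g (x + c) := by
  simpa [Function.comp_def] using hg.comp (isometry_add_right c).lipschitz

section IntegralEquation

variable {E : Type*} [NormedAddCommGroup E] [NormedSpace ℝ E]
  {g : E → E} {β : ℝ → E} {s T : ℝ} {z : E} {I J : Set ℝ} {H H' : ℝ → E}

def IsIntegralSolution (g : E → E) (β : ℝ → E) (s : ℝ) (z : E) (I : Set ℝ) (H : ℝ → E) :
    Prop :=
  ContinuousOn H I ∧ ∀ t ∈ I, H t = z + β t + ∫ r in s..t, g (H r)

namespace IsIntegralSolution

lemma mono (h : IsIntegralSolution g β s z J H) (hIJ : I ⊆ J) :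
    IsIntegralSolution g β s z I H :=
  ⟨h.1.mono hIJ, fun t ht => h.2 t (hIJ ht)⟩

lemma apply_self (h : IsIntegralSolution g β s z I H) (hs : s ∈ I) : H s = z + β s := by
  simpa using h.2 s hs

lemma congr_drift {g' : E → E} (h : IsIntegralSolution g β s z (Ici s) H)
    (hgg' : ∀ t ∈ Ici s, g (H t) = g' (H t)) : IsIntegralSolution g' β s z (Ici s) H := by
  refine ⟨h.1, fun t ht => ?_⟩
  rw [h.2 t ht, integral_congr fun r hr => hgg' r ?_]
  rw [uIcc_of_le ht] at hr
  exact hr.1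

lemma hasDerivWithinAt_sub [CompleteSpace E] (hg : Continuous g)
    (h : IsIntegralSolution g β s z (Icc s T) H) {t : ℝ} (ht : t ∈ Icc s T) :
    HasDerivWithinAt (H - β) (g (H t)) (Icc s T) t := by
  have : Fact (t ∈ Icc s T) := ⟨ht⟩
  have hgH : ContinuousOn (fun r => g (H r)) (Icc s T) := hg.comp_continuousOn h.1
  have hint : HasDerivWithinAt (fun u => z + ∫ r in s..u, g (H r)) (g (H t)) (Icc s T) t :=
    (integral_hasDerivWithinAt_right
      ((hgH.mono (Icc_subset_Icc_right ht.2)).intervalIntegrable_of_Icc ht.1)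
      (hgH.stronglyMeasurableAtFilter_nhdsWithin measurableSet_Icc t)
      (hgH.continuousWithinAt ht)).const_add z
  refine hint.congr_of_mem (fun u hu => ?_) ht
  rw [Pi.sub_apply, h.2 u hu]
  abel

lemma eqOn_Icc [CompleteSpace E] {K : ℝ≥0} (hg : LipschitzWith K g)
    (hβ : ContinuousOn β (Icc s T)) (h : IsIntegralSolution g β s z (Icc s T) H)
    (h' : IsIntegralSolution g β s z (Icc s T) H') :
    EqOn H H' (Icc s T) := by
  intro t ht
  have hs : s ∈ Icc s T := ⟨le_rfl, ht.1.trans ht.2⟩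
  have hderiv : ∀ {G : ℝ → E}, IsIntegralSolution g β s z (Icc s T) G → ∀ u ∈ Ico s T,
      HasDerivWithinAt (G - β) (g ((G - β) u + β u)) (Ici u) u := fun hG u hu => by
    simpa using
      (hG.hasDerivWithinAt_sub hg.continuous (Ico_subset_Icc_self hu)).mono_of_mem_nhdsWithin
        (mem_of_superset (Icc_mem_nhdsGE hu.2) (Icc_subset_Icc_left hu.1))
  exact sub_left_injective <| ODE_solution_unique (fun u => hg.comp_add_right (β u))
    (h.1.sub hβ) (hderiv h) (h'.1.sub hβ) (hderiv h')
    (by simp [h.apply_self hs, h'.apply_self hs]) ht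

end IsIntegralSolution

lemma exists_isIntegralSolution_Icc [CompleteSpace E] {K : ℝ≥0} {L : ℝ}
    (hg : LipschitzWith K g) (hgL : ∀ x, ‖g x‖ ≤ L) (hβ : ContinuousOn β (Icc s T)) (z : E) :
    ∃ H, IsIntegralSolution g β s z (Icc s T) H := by
  rcases lt_or_ge T s with hTs | hsT
  · exact ⟨0, by simp [IsIntegralSolution, Icc_eq_empty_of_lt hTs]⟩
  set v : ℝ → E → E := fun t x => g (x + β t)
  have hv : IsPicardLindelof v ⟨s, left_mem_Icc.2 hsT⟩ z (L.toNNReal * (T - s).toNNReal) 0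
      L.toNNReal K :=
    { lipschitzOnWith := fun t _ => (hg.comp_add_right (β t)).lipschitzOnWith
      continuousOn := fun x _ => hg.continuous.comp_continuousOn (continuousOn_const.add hβ)
      norm_le := fun t _ x _ => (hgL _).trans (Real.le_coe_toNNReal L)
      mul_max_le := by simp [sub_nonneg.2 hsT] }
  obtain ⟨α, hα₀, hα⟩ := hv.exists_eq_forall_mem_Icc_hasDerivWithinAt₀
  refine ⟨α + β, (HasDerivWithinAt.continuousOn hα).add hβ, fun t ht => ?_⟩
  have hsub : uIcc s t ⊆ Icc s T := uIcc_subset_Icc (left_mem_Icc.2 hsT) ht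
  have hvc : ContinuousOn (Function.uncurry v) (uIcc s t ×ˢ univ) :=
    hg.continuous.comp_continuousOn
      (continuous_snd.continuousOn.add ((hβ.mono hsub).comp continuousOn_fst fun p hp => hp.1))
  have hpicard := ODE.picard_eq_of_hasDerivAt hvc
    (fun r hr => (hα r (hsub hr)).mono hsub) (mapsTo_univ _ _)
  simp only [ODE.picard_apply] at hpicard
  rw [Pi.add_apply, ← hpicard, hα₀]
  simp only [v, Pi.add_apply]
  abel

lemma exists_isIntegralSolution_Ici [CompleteSpace E] {K : ℝ≥0} {L : ℝ}
    (hg : LipschitzWith K g) (hgL : ∀ x, ‖g x‖ ≤ L) (hβ : ContinuousOn β (Ici s)) (z : E) :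
    ∃ H, IsIntegralSolution g β s z (Ici s) H := by
  choose sol hsol using fun T =>
    exists_isIntegralSolution_Icc (T := T) hg hgL (hβ.mono Icc_subset_Ici_self) z
  have hagree : ∀ T, EqOn (sol T) (fun t => sol t t) (Icc s T) := fun T t ht =>
    IsIntegralSolution.eqOn_Icc hg (hβ.mono Icc_subset_Ici_self)
      ((hsol T).mono (Icc_subset_Icc_right ht.2)) (hsol t) ⟨ht.1, le_rfl⟩
  refine ⟨fun t => sol t t, fun t ht => ?_, fun t ht => ?_⟩
  · have hnhds : Icc s (t + 1) ∈ 𝓝[Ici s] t := by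
      rw [← Ici_inter_Iic]
      exact inter_mem_nhdsWithin _ (Iic_mem_nhds (by linarith))
    exact (((hsol (t + 1)).1.congr (hagree (t + 1)).symm).continuousWithinAt
      ⟨ht, by linarith⟩).mono_of_mem_nhdsWithin hnhds
  · dsimp only
    rw [(hsol t).2 t ⟨ht, le_rfl⟩, integral_congr fun r hr => congrArg g (hagree t ?_)]
    rwa [uIcc_of_le ht] at hr

end IntegralEquation

lemma le_of_le_while_pos {f : ℝ → ℝ} {s c : ℝ} (hf : ContinuousOn f (Ici s)) (hc : 0 < c)
    (hfs : c ≤ f s) (h : ∀ t, s ≤ t → (∀ r ∈ Icc s t, 0 < f r) → c ≤ f t) :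
    ∀ t ∈ Ici s, c ≤ f t := by
  intro t ht
  refine h t ht fun r hr => ?_
  by_contra! hneg
  have hclosed : IsClosed {r ∈ Icc s t | f r ≤ 0} :=
    (hf.mono Icc_subset_Ici_self).preimage_isClosed_of_isClosed isClosed_Icc isClosed_Iic
  -- `u` is the first time `f ≤ 0`: before it `f ≥ c` by `h`, hence also at `u` by continuity.
  obtain ⟨u, ⟨hu, hfu⟩, hleast⟩ :=
    (isCompact_Icc.of_isClosed_subset hclosed fun _ h => h.1).exists_isLeast ⟨r, hr, hneg⟩
  have hpos : ∀ y ∈ Ico s u, 0 < f y := fun y hy =>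
    lt_of_not_ge fun hy0 => hy.2.not_ge (hleast ⟨⟨hy.1, hy.2.le.trans hu.2⟩, hy0⟩)
  have hcu : c ≤ f u := by
    rcases hu.1.eq_or_lt with rfl | hsu
    · exact hfs
    · refine ContinuousWithinAt.closure_le (f := fun _ => c) ?_ continuousWithinAt_const
        ((hf u hu.1).mono Ico_subset_Ici_self)
        fun y hy => h y hy.1 fun q hq => hpos q ⟨hq.1, hq.2.trans_lt hy.2⟩
      rw [closure_Ico hsu.ne]
      exact right_mem_Icc.2 hsu.le
  linarith

section ComplexBessel

variable {a c : ℝ} {b : ℝ → ℝ} {s : ℝ} {z : ℂ} {H : ℝ → ℂ}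

def besselDrift (a : ℝ) (w : ℂ) : ℂ := -(a : ℂ) * w⁻¹

def clampIm (c : ℝ) (w : ℂ) : ℂ := ⟨w.re, max w.im c⟩

lemma le_im_clampIm (c : ℝ) (w : ℂ) : c ≤ (clampIm c w).im := le_max_right _ _

lemma clampIm_of_le {w : ℂ} (h : c ≤ w.im) : clampIm c w = w := Complex.ext rfl (max_eq_left h)

lemma dist_clampIm_le (c : ℝ) (w w' : ℂ) : dist (clampIm c w) (clampIm c w') ≤ dist w w' := by
  have him := sq_le_sq.2 (abs_max_sub_max_le_abs w.im w'.im c)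
  rw [Complex.dist_eq_re_im, Complex.dist_eq_re_im]
  exact Real.sqrt_le_sqrt (by simp only [clampIm]; linarith)

lemma besselDrift_im_pos (ha : 0 < a) {w : ℂ} (hw : 0 < w.im) : 0 < (besselDrift a w).im := by
  have : 0 < Complex.normSq w := Complex.normSq_pos.2 fun h => by simp [h] at hw
  simp only [besselDrift, neg_mul, Complex.neg_im, Complex.im_ofReal_mul, Complex.inv_im]
  rw [neg_div, mul_neg, neg_neg]
  positivity

lemma norm_besselDrift_le (ha : 0 ≤ a) (hc : 0 < c) {w : ℂ} (hw : c ≤ w.im) :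
    ‖besselDrift a w‖ ≤ a / c := by
  rw [besselDrift, norm_mul, norm_neg, norm_inv, Complex.norm_real, Real.norm_of_nonneg ha,
    ← div_eq_mul_inv]
  exact div_le_div_of_nonneg_left ha hc (hw.trans (Complex.im_le_norm w))

lemma dist_besselDrift_le (ha : 0 ≤ a) (hc : 0 < c) {u v : ℂ} (hu : c ≤ u.im) (hv : c ≤ v.im) :
    dist (besselDrift a u) (besselDrift a v) ≤ a / c ^ 2 * dist u v := by
  have hcu : c ≤ ‖u‖ := hu.trans (Complex.im_le_norm u)
  have hcv : c ≤ ‖v‖ := hv.trans (Complex.im_le_norm v)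
  rw [besselDrift, besselDrift, ← smul_eq_mul, ← smul_eq_mul (-(a : ℂ)), dist_smul₀,
    dist_inv_inv₀ (norm_pos_iff.1 (hc.trans_le hcu)) (norm_pos_iff.1 (hc.trans_le hcv)),
    norm_neg, Complex.norm_real, Real.norm_of_nonneg ha]
  calc a * (dist u v / (‖u‖ * ‖v‖)) = a / (‖u‖ * ‖v‖) * dist u v := by ring
    _ ≤ a / c ^ 2 * dist u v := by
      gcongr
      rw [sq]
      exact mul_le_mul hcu hcv hc.le (hc.le.trans hcu)

lemma lipschitzWith_besselDrift_clampIm (ha : 0 ≤ a) (hc : 0 < c) :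
    LipschitzWith (a / c ^ 2).toNNReal fun w => besselDrift a (clampIm c w) :=
  LipschitzWith.of_dist_le_mul fun w w' => by
    rw [Real.coe_toNNReal _ (by positivity)]
    exact (dist_besselDrift_le ha hc (le_im_clampIm c w) (le_im_clampIm c w')).trans
      (mul_le_mul_of_nonneg_left (dist_clampIm_le c w w') (by positivity))

lemma isCBesselFlow_iff : IsCBesselFlow a b s z H ↔
    IsIntegralSolution (besselDrift a) (fun t => (b t : ℂ) - b s) s z (Ici s) H := by
  refine and_congr_right fun _ => forall₂_congr fun t _ => ?_
  simp only [besselDrift]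
  rw [intervalIntegral.integral_const_mul, neg_mul, ← sub_eq_add_neg]

lemma im_intervalIntegral_pos {F : ℝ → ℂ} {u t : ℝ} (hut : u < t)
    (hF : ContinuousOn F (Icc u t)) (hpos : ∀ r ∈ Icc u t, 0 < (F r).im) :
    0 < (∫ r in u..t, F r).im := by
  rw [← Complex.imCLM_apply, ← Complex.imCLM.intervalIntegral_comp_comm
    (hF.intervalIntegrable_of_Icc hut.le)]
  exact intervalIntegral_pos_of_pos_on
    ((Complex.continuous_im.comp_continuousOn hF).intervalIntegrable_of_Icc hut.le)
    (fun r hr => hpos r (Ioo_subset_Icc_self hr)) hut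

lemma IsIntegralSolution.strictMonoOn_im {g : ℂ → ℂ} {β : ℝ → ℂ} {I : Set ℝ}
    (hI : I.OrdConnected) (hsI : s ∈ I) (h : IsIntegralSolution g β s z I H)
    (hβ : ∀ t, (β t).im = 0) (hg : ContinuousOn (fun t => g (H t)) I)
    (hpos : ∀ t ∈ I, 0 < (g (H t)).im) : StrictMonoOn (fun t => (H t).im) I := by
  intro u hu t ht hut
  have hint : ∀ {t}, t ∈ I → IntervalIntegrable (fun r => g (H r)) volume s t := fun ht =>
    (hg.mono (hI.uIcc_subset hsI ht)).intervalIntegrable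
  have hsub : Icc u t ⊆ I := hI.out hu ht
  have hincr : H t - H u = β t - β u + ∫ r in u..t, g (H r) := by
    rw [h.2 t ht, h.2 u hu, ← integral_interval_sub_left (hint ht) (hint hu)]
    abel
  have hpos_int := im_intervalIntegral_pos hut (hg.mono hsub) fun r hr => hpos r (hsub hr)
  have him := congrArg Complex.im hincr
  simp only [Complex.sub_im, Complex.add_im, hβ, sub_zero, zero_add] at him
  dsimp only
  linarith

lemma IsCBesselFlow.im_le_im (ha : 0 < a) (hz : 0 < z.im) (hH : IsCBesselFlow a b s z H) :
    ∀ t ∈ Ici s, z.im ≤ (H t).im := by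
  have hsol := isCBesselFlow_iff.1 hH
  have hHs : H s = z := by simpa using hsol.apply_self self_mem_Ici
  refine le_of_le_while_pos (Complex.continuous_im.comp_continuousOn hH.1) hz (by simp [hHs])
    fun t ht hpos => ?_
  have hne : ∀ r ∈ Icc s t, H r ≠ 0 := fun r hr h0 => by simpa [h0] using hpos r hr
  have hmono := (hsol.mono Icc_subset_Ici_self).strictMonoOn_im ordConnected_Icc
    (left_mem_Icc.2 ht) (by simp)
    (continuousOn_const.mul ((hH.1.mono Icc_subset_Ici_self).inv₀ hne))
    fun r hr => besselDrift_im_pos ha (hpos r hr)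
  simpa [hHs] using hmono.monotoneOn (left_mem_Icc.2 ht) (right_mem_Icc.2 ht) ht

end ComplexBessel

/-- For `δ < 0`, `a = (1−δ)/2`, a continuous driver `b`, `s ≥ 0` and `z` in the open upper
half-plane, there exists a unique continuous solution `H` on `[s,∞)` of the complex Bessel
equation; moreover `H` stays in the upper half-plane and `t ↦ Im H_t` is strictly increasing. -/
theorem complex_bessel_flow_exists_unique
    (δ : ℝ) (hδ : δ < 0) (a : ℝ) (ha : a = (1 - δ) / 2)
    (b : ℝ → ℝ) (hb : ContinuousOn b (Set.Ici (0 : ℝ)))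
    (s : ℝ) (hs : 0 ≤ s) (z : ℂ) (hz : 0 < z.im) :
    ∃ H : ℝ → ℂ, IsCBesselFlow a b s z H ∧
      (∀ t ∈ Set.Ici s, 0 < (H t).im) ∧
      StrictMonoOn (fun t => (H t).im) (Set.Ici s) ∧
      ∀ H' : ℝ → ℂ, IsCBesselFlow a b s z H' → ∀ t ∈ Set.Ici s, H' t = H t := by
  have ha₀ : 0 < a := by rw [ha]; linarith
  set c := z.im
  set β : ℝ → ℂ := fun t => (b t : ℂ) - b s
  have hβ : ContinuousOn β (Ici s) :=
    (Complex.continuous_ofReal.comp_continuousOn (hb.mono (Ici_subset_Ici.2 hs))).sub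
      continuousOn_const
  have hlip := lipschitzWith_besselDrift_clampIm ha₀.le hz
  obtain ⟨H, hH⟩ := exists_isIntegralSolution_Ici hlip
    (fun w => norm_besselDrift_le ha₀.le hz (le_im_clampIm c w)) hβ z
  have hmono : StrictMonoOn (fun t => (H t).im) (Ici s) :=
    hH.strictMonoOn_im ordConnected_Ici self_mem_Ici (by simp [β])
      (hlip.continuous.comp_continuousOn hH.1)
      fun t _ => besselDrift_im_pos ha₀ (hz.trans_le (le_im_clampIm c _))
  have hHs : H s = z := by simpa [β] using hH.apply_self self_mem_Ici
  have hcH : ∀ t ∈ Ici s, c ≤ (H t).im := fun t ht => by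
    simpa [hHs] using hmono.monotoneOn self_mem_Ici ht ht
  refine ⟨H, isCBesselFlow_iff.2 (hH.congr_drift fun t ht => by rw [clampIm_of_le (hcH t ht)]),
    fun t ht => hz.trans_le (hcH t ht), hmono, fun H' hH' t ht => ?_⟩
  have hH'trunc := (isCBesselFlow_iff.1 hH').congr_drift
    (g' := fun w => besselDrift a (clampIm c w))
    fun r hr => by rw [clampIm_of_le (hH'.im_le_im ha₀ hz r hr)]
  exact IsIntegralSolution.eqOn_Icc hlip (hβ.mono Icc_subset_Ici_self)
    (hH'trunc.mono Icc_subset_Ici_self) (hH.mono Icc_subset_Ici_self) ⟨ht, le_rfl⟩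
end
end

section
/- Let δ < 0 and a := (1−δ)/2, let b : [0,∞) → ℝ be continuous, let s ≥ 0 and y > 0, and let H : [s,∞) → ℍ be the unique continuous solution of H_t = iy + (b_t − b_s) − a ∫_s^t (1/H_r) dr. Then for all t ≥ s: |Re H_t| ≤ 2 · sup_{r ∈ [s,t]} |b_r − b_s| and y ≤ Im H_t ≤ √(y² + 2a(t−s)). -/
/-!
Write `H = X + iY`. Taking real and imaginary parts, `X_t = (b_t - b_s) - a ∫ X/|H|²` and
`Y_t = y + a ∫ Y/|H|²`. The drift of `X` always points towards `0`: after the last zero `t₁ ≤ t`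
of `X`, the sign of `X` is constant and the drift only shrinks `|X|`, so
`|X_t| ≤ |b_t - b_{t₁}| ≤ 2 sup |b - b_s|`. The drift of `Y` is nonnegative, so `Y` is
nondecreasing, and `d(Y²)/dt = 2a Y²/|H|² ≤ 2a`.
-/

open MeasureTheory Set

noncomputable section

theorem exists_eq_zero_and_nonneg_on_Icc {X : ℝ → ℝ} {s u : ℝ} (hsu : s ≤ u)
    (hX : ContinuousOn X (Icc s u)) (hXs : X s ≤ 0) (hXu : 0 ≤ X u) :
    ∃ t ∈ Icc s u, X t = 0 ∧ ∀ r ∈ Icc t u, 0 ≤ X r := by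
  -- The last point of `[s, u]` where `X ≤ 0` is a zero, by the intermediate value theorem.
  set S := Icc s u ∩ X ⁻¹' Iic 0
  have hS : IsClosed S := hX.preimage_isClosed_of_isClosed isClosed_Icc isClosed_Iic
  have hSne : S.Nonempty := ⟨s, ⟨le_rfl, hsu⟩, hXs⟩
  have hSbdd : BddAbove S := ⟨u, fun r hr => hr.1.2⟩
  obtain ⟨⟨hst, htu⟩, hXt⟩ : sSup S ∈ S := hS.csSup_mem hSne hSbdd
  have hpos : ∀ r ∈ Ioc (sSup S) u, 0 < X r := fun r hr => not_le.1 fun hXr =>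
    (le_csSup hSbdd ⟨⟨hst.trans hr.1.le, hr.2⟩, hXr⟩).not_gt hr.1
  obtain ⟨c, hc, hXc⟩ := intermediate_value_Icc htu (hX.mono (Icc_subset_Icc_left hst)) ⟨hXt, hXu⟩
  have hct : c = sSup S :=
    le_antisymm (le_csSup hSbdd ⟨⟨hst.trans hc.1, hc.2⟩, hXc.le⟩) hc.1
  refine ⟨sSup S, ⟨hst, htu⟩, hct ▸ hXc, fun r hr => ?_⟩
  rcases hr.1.eq_or_lt with h | h
  · rw [← h, ← hct, hXc]
  · exact (hpos r ⟨h, hr.2⟩).le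

theorem le_two_mul_of_le_sub_at_last_zero {X B : ℝ → ℝ} {s u M : ℝ} (hsu : s ≤ u)
    (hX : ContinuousOn X (Icc s u)) (hXs : X s = 0) (hB : ∀ r ∈ Icc s u, |B r| ≤ M)
    (hdrift : ∀ t ∈ Icc s u, X t = 0 → (∀ r ∈ Icc t u, 0 ≤ X r) → X u ≤ B u - B t) :
    X u ≤ 2 * M := by
  have hBu := abs_le.1 (hB u ⟨hsu, le_rfl⟩)
  rcases le_or_gt 0 (X u) with hXu | hXu
  · obtain ⟨t, ht, hXt, hnonneg⟩ := exists_eq_zero_and_nonneg_on_Icc hsu hX hXs.le hXu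
    have hBt := abs_le.1 (hB t ht)
    linarith [hdrift t ht hXt hnonneg]
  · linarith

theorem abs_le_two_mul_of_sub_eq_sub_integral {X B N : ℝ → ℝ} {a s u M : ℝ} (ha : 0 ≤ a)
    (hsu : s ≤ u) (hX : ContinuousOn X (Icc s u)) (hXs : X s = 0) (hN : ∀ r, 0 ≤ N r)
    (hB : ∀ r ∈ Icc s u, |B r| ≤ M)
    (hdiff : ∀ t ∈ Icc s u, X u - X t = B u - B t - a * ∫ r in t..u, X r / N r) :
    |X u| ≤ 2 * M := by
  rw [abs_le, neg_le]
  constructor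
  · refine le_two_mul_of_le_sub_at_last_zero (X := fun r => -X r) (B := fun r => -B r) hsu hX.neg
      (by simp [hXs]) (fun r hr => (abs_neg (B r)).trans_le (hB r hr)) fun t ht hXt hnonneg => ?_
    have hint : 0 ≤ ∫ r in t..u, -X r / N r :=
      intervalIntegral.integral_nonneg ht.2 fun r hr => div_nonneg (hnonneg r hr) (hN r)
    simp only [neg_div, intervalIntegral.integral_neg] at hint
    linarith [hdiff t ht, neg_eq_zero.1 hXt, mul_nonneg ha hint]
  · refine le_two_mul_of_le_sub_at_last_zero hsu hX hXs hB fun t ht hXt hnonneg => ?_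
    have hint : 0 ≤ ∫ r in t..u, X r / N r :=
      intervalIntegral.integral_nonneg ht.2 fun r hr => div_nonneg (hnonneg r hr) (hN r)
    linarith [hdiff t ht, mul_nonneg ha hint]

theorem sq_sub_sq_le_of_hasDerivAt {Y Y' : ℝ → ℝ} {s t c : ℝ} (hst : s ≤ t)
    (hY : ContinuousOn Y (Icc s t)) (hY' : ∀ x ∈ Ioo s t, HasDerivAt Y (Y' x) x)
    (hc : ∀ x ∈ Ioo s t, Y x * Y' x ≤ c) : Y t ^ 2 - Y s ^ 2 ≤ 2 * c * (t - s) := by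
  rw [← interior_Icc] at hY' hc
  have hY2' : ∀ x ∈ interior (Icc s t), HasDerivAt (Y ^ 2) (2 * Y x * Y' x) x := fun x hx => by
    simpa using (hY' x hx).pow 2
  refine (convex_Icc s t).image_sub_le_mul_sub_of_deriv_le (hY.pow 2)
    (fun x hx => (hY2' x hx).differentiableAt.differentiableWithinAt)
    (fun x hx => by rw [(hY2' x hx).deriv]; linarith [hc x hx])
    s ⟨le_rfl, hst⟩ t ⟨hst, le_rfl⟩ hst

namespace IsCBesselFlow

variable {a : ℝ} {b : ℝ → ℝ} {s : ℝ} {z : ℂ} {H : ℝ → ℂ}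

theorem apply_self (hH : IsCBesselFlow a b s z H) : H s = z := by
  simpa using hH.2 s self_mem_Ici

theorem intervalIntegrable_inv (hH : IsCBesselFlow a b s z H) (hH0 : ∀ r ∈ Ici s, H r ≠ 0)
    {t₁ t : ℝ} (ht₁ : s ≤ t₁) (ht : t₁ ≤ t) :
    IntervalIntegrable (fun r => (H r)⁻¹) volume t₁ t :=
  ((hH.1.inv₀ hH0).mono fun _ hr => ht₁.trans hr.1).intervalIntegrable_of_Icc ht

theorem sub_eq_sub_integral (hH : IsCBesselFlow a b s z H) (hH0 : ∀ r ∈ Ici s, H r ≠ 0)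
    {t₁ t : ℝ} (ht₁ : s ≤ t₁) (ht : t₁ ≤ t) :
    H t - H t₁ = (b t - b t₁ : ℂ) - a * ∫ r in t₁..t, (H r)⁻¹ := by
  rw [hH.2 t (ht₁.trans ht), hH.2 t₁ ht₁, ← intervalIntegral.integral_interval_sub_left
    (hH.intervalIntegrable_inv hH0 le_rfl (ht₁.trans ht))
    (hH.intervalIntegrable_inv hH0 le_rfl ht₁)]
  ring

theorem re_sub_re (hH : IsCBesselFlow a b s z H) (hH0 : ∀ r ∈ Ici s, H r ≠ 0) {t₁ t : ℝ}
    (ht₁ : s ≤ t₁) (ht : t₁ ≤ t) :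
    (H t).re - (H t₁).re
      = b t - b t₁ - a * ∫ r in t₁..t, (H r).re / Complex.normSq (H r) := by
  have h := congrArg Complex.re (hH.sub_eq_sub_integral hH0 ht₁ ht)
  have hint := intervalIntegral.intervalIntegral_re (hH.intervalIntegrable_inv hH0 ht₁ ht)
  simp only [RCLike.re_to_complex, Complex.inv_re] at hint
  rw [← Complex.sub_re, h]
  simp [← hint]

theorem im_sub_im (hH : IsCBesselFlow a b s z H) (hH0 : ∀ r ∈ Ici s, H r ≠ 0) {t₁ t : ℝ}
    (ht₁ : s ≤ t₁) (ht : t₁ ≤ t) :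
    (H t).im - (H t₁).im = a * ∫ r in t₁..t, (H r).im / Complex.normSq (H r) := by
  have h := congrArg Complex.im (hH.sub_eq_sub_integral hH0 ht₁ ht)
  have hint := intervalIntegral.intervalIntegral_im (hH.intervalIntegrable_inv hH0 ht₁ ht)
  simp only [RCLike.im_to_complex, Complex.inv_im, neg_div, intervalIntegral.integral_neg] at hint
  rw [← Complex.sub_im, h]
  simp [← hint]

theorem abs_re_le (hH : IsCBesselFlow a b s z H) (ha : 0 ≤ a) (hH0 : ∀ r ∈ Ici s, H r ≠ 0)
    (hz : z.re = 0) {t M : ℝ} (ht : s ≤ t) (hM : ∀ r ∈ Icc s t, |b r - b s| ≤ M) :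
    |(H t).re| ≤ 2 * M :=
  abs_le_two_mul_of_sub_eq_sub_integral (X := fun r => (H r).re) (B := fun r => b r - b s)
    (N := fun r => Complex.normSq (H r)) ha ht
    ((Complex.continuous_re.comp_continuousOn hH.1).mono Icc_subset_Ici_self)
    (by rw [hH.apply_self, hz]) (fun r => Complex.normSq_nonneg _) hM
    fun t₁ ht₁ => by rw [hH.re_sub_re hH0 ht₁.1 ht₁.2]; ring

theorem monotoneOn_im (hH : IsCBesselFlow a b s z H) (ha : 0 ≤ a) (hH0 : ∀ r ∈ Ici s, H r ≠ 0)
    (hIm : ∀ r ∈ Ici s, 0 ≤ (H r).im) : MonotoneOn (fun t => (H t).im) (Ici s) := by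
  intro t₁ ht₁ t _ h
  have hint : 0 ≤ ∫ r in t₁..t, (H r).im / Complex.normSq (H r) :=
    intervalIntegral.integral_nonneg h fun r hr =>
      div_nonneg (hIm r (le_trans ht₁ hr.1)) (Complex.normSq_nonneg _)
  linarith [hH.im_sub_im hH0 ht₁ h, mul_nonneg ha hint]

theorem hasDerivAt_im (hH : IsCBesselFlow a b s z H) (hH0 : ∀ r ∈ Ici s, H r ≠ 0) {x : ℝ}
    (hx : s < x) :
    HasDerivAt (fun t => (H t).im) (a * ((H x).im / Complex.normSq (H x))) x := by
  set g := fun r => (H r).im / Complex.normSq (H r)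
  have hg : ContinuousOn g (Ici s) :=
    (Complex.continuous_im.comp_continuousOn hH.1).div
      (Complex.continuous_normSq.comp_continuousOn hH.1)
      fun r hr => Complex.normSq_pos.2 (hH0 r hr) |>.ne'
  have hFTC : HasDerivAt (fun t => ∫ r in s..t, g r) (g x) x :=
    intervalIntegral.integral_hasDerivAt_right
      ((hg.mono Icc_subset_Ici_self).intervalIntegrable_of_Icc hx.le)
      ((hg.mono Ioi_subset_Ici_self).stronglyMeasurableAtFilter isOpen_Ioi x hx)
      (hg.continuousAt (Ici_mem_nhds hx))
  refine ((hFTC.const_mul a).const_add (H s).im).congr_of_eventuallyEq ?_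
  filter_upwards [Ici_mem_nhds hx] with t ht
  linarith [hH.im_sub_im hH0 le_rfl ht]

theorem im_sq_le (hH : IsCBesselFlow a b s z H) (ha : 0 ≤ a) (hH0 : ∀ r ∈ Ici s, H r ≠ 0)
    {t : ℝ} (ht : s ≤ t) : (H t).im ^ 2 ≤ z.im ^ 2 + 2 * a * (t - s) := by
  have hY : ContinuousOn (fun t => (H t).im) (Icc s t) :=
    (Complex.continuous_im.comp_continuousOn hH.1).mono Icc_subset_Ici_self
  have hdrift : ∀ x ∈ Ioo s t, (H x).im * (a * ((H x).im / Complex.normSq (H x))) ≤ a := by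
    intro x hx
    have hN : (H x).im ^ 2 ≤ Complex.normSq (H x) := by
      rw [Complex.normSq_apply]; nlinarith [sq_nonneg (H x).re]
    have hratio : (H x).im ^ 2 / Complex.normSq (H x) ≤ 1 :=
      div_le_one_of_le₀ hN (Complex.normSq_nonneg _)
    calc (H x).im * (a * ((H x).im / Complex.normSq (H x)))
        = a * ((H x).im ^ 2 / Complex.normSq (H x)) := by ring
      _ ≤ a * 1 := mul_le_mul_of_nonneg_left hratio ha
      _ = a := mul_one a
  have h := sq_sub_sq_le_of_hasDerivAt ht hY (fun x hx => hH.hasDerivAt_im hH0 hx.1) hdrift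
  rw [hH.apply_self] at h
  linarith

end IsCBesselFlow

theorem complex_bessel_flow_re_im_bounds_general
    (δ : ℝ) (hδ : δ < 0) (a : ℝ) (ha : a = (1 - δ) / 2)
    (b : ℝ → ℝ) (hb : ContinuousOn b (Set.Ici (0 : ℝ)))
    (s : ℝ) (hs : 0 ≤ s) (y : ℝ)
    (H : ℝ → ℂ) (hH : IsCBesselFlow a b s ((y : ℂ) * Complex.I) H)
    (hIm : ∀ t ∈ Set.Ici s, 0 < (H t).im) :
    ∀ t ∈ Set.Ici s,
      |(H t).re| ≤ 2 * sSup ((fun r => |b r - b s|) '' Set.Icc s t) ∧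
      y ≤ (H t).im ∧ (H t).im ≤ Real.sqrt (y ^ 2 + 2 * a * (t - s)) := by
  intro t ht
  have ha0 : 0 ≤ a := by rw [ha]; linarith
  have hH0 : ∀ r ∈ Ici s, H r ≠ 0 := fun r hr h0 => (hIm r hr).ne' (by simp [h0])
  have hbdd : BddAbove ((fun r => |b r - b s|) '' Icc s t) :=
    (isCompact_Icc.image_of_continuousOn
      (((hb.mono fun r hr => hs.trans hr.1).sub continuousOn_const).abs)).bddAbove
  have hzre : ((y : ℂ) * Complex.I).re = 0 := by simp
  have hzim : ((y : ℂ) * Complex.I).im = y := by simp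
  refine ⟨hH.abs_re_le ha0 hH0 hzre ht fun r hr => le_csSup hbdd ⟨r, hr, rfl⟩, ?_, ?_⟩
  · simpa [hH.apply_self] using
      hH.monotoneOn_im ha0 hH0 (fun r hr => (hIm r hr).le) self_mem_Ici ht ht
  · exact (le_abs_self _).trans (Real.abs_le_sqrt (hzim ▸ hH.im_sq_le ha0 hH0 ht))

/-- Estimates on the real and imaginary parts of the complex Bessel flow started at `iy`:
`|Re H_t| ≤ 2 sup_{r∈[s,t]} |b_r − b_s|` and `y ≤ Im H_t ≤ √(y² + 2a(t−s))`. -/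
theorem complex_bessel_flow_re_im_bounds
    (δ : ℝ) (hδ : δ < 0) (a : ℝ) (ha : a = (1 - δ) / 2)
    (b : ℝ → ℝ) (hb : ContinuousOn b (Set.Ici (0 : ℝ)))
    (s : ℝ) (hs : 0 ≤ s) (y : ℝ) (hy : 0 < y)
    (H : ℝ → ℂ) (hH : IsCBesselFlow a b s ((y : ℂ) * Complex.I) H)
    (hIm : ∀ t ∈ Set.Ici s, 0 < (H t).im) :
    ∀ t ∈ Set.Ici s,
      |(H t).re| ≤ 2 * sSup ((fun r => |b r - b s|) '' Set.Icc s t) ∧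
      y ≤ (H t).im ∧ (H t).im ≤ Real.sqrt (y ^ 2 + 2 * a * (t - s)) :=
  complex_bessel_flow_re_im_bounds_general δ hδ a ha b hb s hs y H hH hIm
end
end

section
/- Let δ < 0 and a := (1−δ)/2, let b : [0,∞) → ℝ be continuous, and let H^b(s,t,z) denote the complex Bessel flow. For z ∈ ℍ let K^b(s,·,z) : [s,∞) → ℂ be the unique continuous solution of the linearized equation K_t = 1 + a ∫_s^t K_r / (H^b(s,r,z))² dr. Then for every 0 ≤ s ≤ t, the map z ↦ H^b(s,t,z) is holomorphic on ℍ and its complex derivative at z equals K^b(s,t,z). -/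
/-!
For `w` near `z`, the difference `D = H(w) - H(z)` solves the linear equation
`D' = a D / (H(w) H(z))`, whose coefficient is bounded because the imaginary parts of both flows
only increase; Grönwall gives `‖D‖ ≤ M ‖w - z‖`. The second-order remainder
`E = D - (w - z) K(z)` then solves `E' = a E / H(z)² - a D² / (H(w) H(z)²)`, and a second
application of Grönwall gives `‖E‖ ≤ C ‖w - z‖²`, which is differentiability with derivative `K`.
-/

open MeasureTheory Set

noncomputable section

/-- `K` is a continuous solution on `[s,∞)` of the linearized equation
`K_t = 1 + a ∫_s^t K_r / (H_r)² dr` along the flow `H`. -/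
def IsLinearizedFlow (a : ℝ) (s : ℝ) (H K : ℝ → ℂ) : Prop :=
  ContinuousOn K (Set.Ici s) ∧
    ∀ t ∈ Set.Ici s, K t = 1 + (a : ℂ) * ∫ r in s..t, K r / (H r) ^ 2

open Filter Topology Asymptotics Real

section Gronwall

variable {E : Type*} [NormedAddCommGroup E] [NormedSpace ℝ E] [CompleteSpace E]

theorem hasDerivWithinAt_Ici_integral_of_continuousOn {g : ℝ → E} {s x : ℝ}
    (hg : ContinuousOn g (Ici s)) (hx : s ≤ x) :
    HasDerivWithinAt (fun u => ∫ r in s..u, g r) (g x) (Ici x) x := by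
  have hmem : Ici s ∈ 𝓝[>] x :=
    mem_of_superset self_mem_nhdsWithin fun _ hy => hx.trans (le_of_lt hy)
  exact intervalIntegral.integral_hasDerivWithinAt_right
    ((hg.mono Icc_subset_Ici_self).intervalIntegrable_of_Icc hx)
    ⟨Ici s, hmem, hg.aestronglyMeasurable measurableSet_Ici⟩
    ((hg x hx).mono_of_mem_nhdsWithin hmem)

theorem norm_le_gronwallBound_of_eq_add_integral {f g : ℝ → E} {c : E} {s t K ε : ℝ}
    (hg : ContinuousOn g (Ici s)) (hf : ∀ x ∈ Ici s, f x = c + ∫ r in s..x, g r)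
    (bound : ∀ x ∈ Ico s t, ‖g x‖ ≤ K * ‖f x‖ + ε) :
    ∀ x ∈ Icc s t, ‖f x‖ ≤ gronwallBound ‖c‖ K ε (x - s) := by
  have hprimitive : ContinuousOn (fun x => ∫ r in s..x, g r) (Icc s t) := by
    rcases le_or_gt s t with hst | hts
    · rw [← uIcc_of_le hst]
      refine intervalIntegral.continuousOn_primitive_interval ?_
      rw [uIcc_of_le hst]
      exact (hg.mono Icc_subset_Ici_self).integrableOn_Icc
    · simp [Icc_eq_empty_of_lt hts]
  refine norm_le_gronwallBound_of_norm_deriv_right_le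
    ((continuousOn_const.add hprimitive).congr fun x hx => hf x hx.1)
    (fun x hx => ?_) (by simp [hf s self_mem_Ici]) bound
  exact ((hasDerivWithinAt_Ici_integral_of_continuousOn hg hx.1).const_add c).congr
    (fun y hy => hf y (hx.1.trans hy)) (hf x hx.1)

theorem gronwallBound_zero_mul (K ε c x : ℝ) :
    gronwallBound 0 K (ε * c) x = gronwallBound 0 K ε x * c := by
  by_cases hK : K = 0
  · simp only [hK, gronwallBound_K0]
    ring
  · simp only [gronwallBound_of_K_ne_0 hK]
    ring

end Gronwall

theorem HasDerivAt.of_norm_sub_sub_le_sq {𝕜 F : Type*} [NontriviallyNormedField 𝕜]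
    [NormedAddCommGroup F] [NormedSpace 𝕜 F] {f : 𝕜 → F} {f' : F} {x : 𝕜} {C : ℝ}
    (h : ∀ᶠ y in 𝓝 x, ‖f y - f x - (y - x) • f'‖ ≤ C * ‖y - x‖ ^ 2) :
    HasDerivAt f f' x :=
  .of_isLittleO <| (IsBigO.of_bound C <| h.mono fun y hy => by simpa using hy).trans_isLittleO
    (isLittleO_pow_sub_sub x one_lt_two)

theorem Complex.norm_ofReal_mul_div_le {a μ : ℝ} (ha : 0 ≤ a) (hμ : 0 < μ) (d : ℂ) {p : ℂ}
    (hp : μ ≤ ‖p‖) : ‖(a : ℂ) * d / p‖ ≤ a / μ * ‖d‖ := by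
  rw [norm_div, norm_mul, Complex.norm_real, Real.norm_of_nonneg ha, div_mul_eq_mul_div]
  exact div_le_div_of_nonneg_left (by positivity) hμ hp

section BesselFlow

variable {a : ℝ} {b : ℝ → ℝ} {s : ℝ} {z w : ℂ} {H Hz Hw K : ℝ → ℂ}

theorem IsCBesselFlow.apply_self_s4 (hH : IsCBesselFlow a b s z H) : H s = z := by
  simpa using hH.2 s self_mem_Ici

theorem IsCBesselFlow.im_le (ha : 0 ≤ a) (hH : IsCBesselFlow a b s z H)
    (hpos : ∀ r ∈ Ici s, 0 < (H r).im) : ∀ r ∈ Ici s, z.im ≤ (H r).im := by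
  intro r hr
  have hcont : ContinuousOn (fun u => (H u)⁻¹) (Icc s r) :=
    (hH.1.mono Icc_subset_Ici_self).inv₀ fun u hu => ne_of_apply_ne Complex.im (hpos u hu.1).ne'
  have him_integral : ∫ u in s..r, ((H u)⁻¹).im ≤ 0 := by
    simpa using intervalIntegral.integral_mono_on hr
      ((Complex.continuous_im.comp_continuousOn hcont).intervalIntegrable_of_Icc hr)
      intervalIntegrable_const fun u hu => show ((H u)⁻¹).im ≤ 0 by
        rw [Complex.inv_im, neg_div, neg_nonpos]
        exact div_nonneg (hpos u hu.1).le (Complex.normSq_nonneg _)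
  have him_eq : (H r).im = z.im - a * ∫ u in s..r, ((H u)⁻¹).im := by
    have him_comm := Complex.imCLM.intervalIntegral_comp_comm
      (hcont.intervalIntegrable_of_Icc (μ := volume) hr)
    simp only [Complex.imCLM_apply] at him_comm
    rw [him_comm, hH.2 r hr]
    simp
  rw [him_eq]
  linarith [mul_nonneg ha (neg_nonneg.2 him_integral)]

theorem IsCBesselFlow.im_pos (hH : IsCBesselFlow a b s z H) (hpos : ∀ r ∈ Ici s, 0 < (H r).im) :
    0 < z.im :=
  hH.apply_self_s4 ▸ hpos s self_mem_Ici

theorem IsCBesselFlow.im_le_norm (ha : 0 ≤ a) (hH : IsCBesselFlow a b s z H)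
    (hpos : ∀ r ∈ Ici s, 0 < (H r).im) : ∀ r ∈ Ici s, z.im ≤ ‖H r‖ :=
  fun r hr => (hH.im_le ha hpos r hr).trans (Complex.im_le_norm _)

theorem IsCBesselFlow.sub_eq_integral (hw : IsCBesselFlow a b s w Hw)
    (hz : IsCBesselFlow a b s z Hz) (hw0 : ∀ r ∈ Ici s, Hw r ≠ 0) (hz0 : ∀ r ∈ Ici s, Hz r ≠ 0) :
    ∀ x ∈ Ici s,
      Hw x - Hz x = (w - z) + ∫ r in s..x, a * (Hw r - Hz r) / (Hw r * Hz r) := by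
  intro x hx
  have hint {H : ℝ → ℂ} (hH : ContinuousOn H (Ici s)) (h0 : ∀ r ∈ Ici s, H r ≠ 0) :
      IntervalIntegrable (fun r => (H r)⁻¹) volume s x :=
    ((hH.mono Icc_subset_Ici_self).inv₀ fun r hr => h0 r hr.1).intervalIntegrable_of_Icc hx
  have hintegrand : ∀ r ∈ uIcc s x,
      a * (Hw r - Hz r) / (Hw r * Hz r) = -a * ((Hw r)⁻¹ - (Hz r)⁻¹) := by
    intro r hr
    rw [uIcc_of_le hx] at hr
    have := hw0 r hr.1
    have := hz0 r hr.1
    field_simp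
    ring
  rw [intervalIntegral.integral_congr hintegrand, intervalIntegral.integral_const_mul,
    intervalIntegral.integral_sub (hint hw.1 hw0) (hint hz.1 hz0), hw.2 x hx, hz.2 x hx]
  ring

theorem IsCBesselFlow.norm_sub_le (ha : 0 ≤ a) (hw : IsCBesselFlow a b s w Hw)
    (hwpos : ∀ r ∈ Ici s, 0 < (Hw r).im) (hz : IsCBesselFlow a b s z Hz)
    (hzpos : ∀ r ∈ Ici s, 0 < (Hz r).im) :
    ∀ x ∈ Ici s, ‖Hw x - Hz x‖ ≤ ‖w - z‖ * exp (a / (w.im * z.im) * (x - s)) := by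
  intro x hx
  have hw0 : ∀ r ∈ Ici s, Hw r ≠ 0 := fun r hr => ne_of_apply_ne Complex.im (hwpos r hr).ne'
  have hz0 : ∀ r ∈ Ici s, Hz r ≠ 0 := fun r hr => ne_of_apply_ne Complex.im (hzpos r hr).ne'
  have hwz_im : 0 < w.im * z.im := mul_pos (hw.im_pos hwpos) (hz.im_pos hzpos)
  have hcont : ContinuousOn (fun r => a * (Hw r - Hz r) / (Hw r * Hz r)) (Ici s) :=
    (continuousOn_const.mul (hw.1.sub hz.1)).div (hw.1.mul hz.1)
      fun r hr => mul_ne_zero (hw0 r hr) (hz0 r hr)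
  have hbound : ∀ r ∈ Ico s x,
      ‖a * (Hw r - Hz r) / (Hw r * Hz r)‖ ≤ a / (w.im * z.im) * ‖Hw r - Hz r‖ + 0 := by
    intro r hr
    rw [add_zero]
    refine Complex.norm_ofReal_mul_div_le ha hwz_im _ ?_
    rw [norm_mul]
    exact mul_le_mul (hw.im_le_norm ha hwpos r hr.1) (hz.im_le_norm ha hzpos r hr.1)
      (hz.im_pos hzpos).le (norm_nonneg _)
  simpa [gronwallBound_ε0] using norm_le_gronwallBound_of_eq_add_integral hcont
    (hw.sub_eq_integral hz hw0 hz0) hbound x ⟨hx, le_rfl⟩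

theorem IsCBesselFlow.norm_sub_sq_le (ha : 0 ≤ a) (hw : IsCBesselFlow a b s w Hw)
    (hwpos : ∀ r ∈ Ici s, 0 < (Hw r).im) (hz : IsCBesselFlow a b s z Hz)
    (hzpos : ∀ r ∈ Ici s, 0 < (Hz r).im) (hwz : z.im / 2 ≤ w.im) {t : ℝ} :
    ∀ x ∈ Icc s t, ‖Hw x - Hz x‖ ^ 2 ≤ exp (4 * a / z.im ^ 2 * (t - s)) * ‖w - z‖ ^ 2 := by
  intro x hx
  have hz_im : 0 < z.im := hz.im_pos hzpos
  have hw_im : 0 < w.im := hw.im_pos hwpos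
  have hrate : a / (w.im * z.im) ≤ 2 * a / z.im ^ 2 := by
    rw [div_le_div_iff₀ (by positivity) (by positivity)]
    nlinarith [mul_nonneg (mul_nonneg ha hz_im.le) (by linarith : 0 ≤ 2 * w.im - z.im)]
  calc ‖Hw x - Hz x‖ ^ 2 ≤ (‖w - z‖ * exp (a / (w.im * z.im) * (x - s))) ^ 2 :=
        pow_le_pow_left₀ (norm_nonneg _) (hw.norm_sub_le ha hwpos hz hzpos x hx.1) 2
    _ = exp (2 * (a / (w.im * z.im)) * (x - s)) * ‖w - z‖ ^ 2 := by
        rw [mul_pow, ← exp_nat_mul]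
        ring_nf
    _ ≤ exp (2 * (2 * a / z.im ^ 2) * (t - s)) * ‖w - z‖ ^ 2 := by
        gcongr
        · linarith [hx.1]
        · exact hx.2
    _ = exp (4 * a / z.im ^ 2 * (t - s)) * ‖w - z‖ ^ 2 := by ring_nf

theorem IsLinearizedFlow.sub_sub_mul_eq_integral (hw : IsCBesselFlow a b s w Hw)
    (hz : IsCBesselFlow a b s z Hz) (hw0 : ∀ r ∈ Ici s, Hw r ≠ 0) (hz0 : ∀ r ∈ Ici s, Hz r ≠ 0)
    (hK : IsLinearizedFlow a s Hz K) :
    ∀ x ∈ Ici s, Hw x - Hz x - (w - z) * K x =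
      ∫ r in s..x, (a * (Hw r - Hz r - (w - z) * K r) / Hz r ^ 2 -
        a * (Hw r - Hz r) ^ 2 / (Hw r * Hz r ^ 2)) := by
  intro x hx
  have hint₁ : IntervalIntegrable (fun r => a * (Hw r - Hz r) / (Hw r * Hz r)) volume s x :=
    (((continuousOn_const.mul (hw.1.sub hz.1)).div (hw.1.mul hz.1) fun r hr =>
      mul_ne_zero (hw0 r hr) (hz0 r hr)).mono Icc_subset_Ici_self).intervalIntegrable_of_Icc hx
  have hint₂ : IntervalIntegrable (fun r => K r / Hz r ^ 2) volume s x :=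
    ((hK.1.div (hz.1.pow 2) fun r hr => pow_ne_zero 2 (hz0 r hr)).mono
      Icc_subset_Ici_self).intervalIntegrable_of_Icc hx
  have hintegrand : ∀ r ∈ uIcc s x,
      a * (Hw r - Hz r - (w - z) * K r) / Hz r ^ 2 - a * (Hw r - Hz r) ^ 2 / (Hw r * Hz r ^ 2) =
        a * (Hw r - Hz r) / (Hw r * Hz r) - (a * (w - z)) * (K r / Hz r ^ 2) := by
    intro r hr
    rw [uIcc_of_le hx] at hr
    have := hw0 r hr.1
    have := hz0 r hr.1
    field_simp
    ring
  rw [intervalIntegral.integral_congr hintegrand,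
    intervalIntegral.integral_sub hint₁ (hint₂.const_mul _),
    intervalIntegral.integral_const_mul, hw.sub_eq_integral hz hw0 hz0 x hx, hK.2 x hx]
  ring

theorem IsLinearizedFlow.exists_norm_sub_sub_mul_le (ha : 0 ≤ a) (hz : IsCBesselFlow a b s z Hz)
    (hzpos : ∀ r ∈ Ici s, 0 < (Hz r).im) (hK : IsLinearizedFlow a s Hz K) {t : ℝ} (ht : s ≤ t) :
    ∃ C, ∀ w Hw, IsCBesselFlow a b s w Hw → (∀ r ∈ Ici s, 0 < (Hw r).im) → z.im / 2 ≤ w.im →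
      ‖Hw t - Hz t - (w - z) * K t‖ ≤ C * ‖w - z‖ ^ 2 := by
  set m := z.im
  have hm : 0 < m := hz.im_pos hzpos
  set M := exp (4 * a / m ^ 2 * (t - s))
  refine ⟨gronwallBound 0 (a / m ^ 2) (2 * a / m ^ 3 * M) (t - s),
    fun w Hw hw hwpos hwz => ?_⟩
  have hw0 : ∀ r ∈ Ici s, Hw r ≠ 0 := fun r hr => ne_of_apply_ne Complex.im (hwpos r hr).ne'
  have hz0 : ∀ r ∈ Ici s, Hz r ≠ 0 := fun r hr => ne_of_apply_ne Complex.im (hzpos r hr).ne'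
  have hlipschitz : ∀ x ∈ Icc s t, ‖Hw x - Hz x‖ ^ 2 ≤ M * ‖w - z‖ ^ 2 :=
    hw.norm_sub_sq_le ha hwpos hz hzpos hwz
  have hcont : ContinuousOn (fun r => a * (Hw r - Hz r - (w - z) * K r) / Hz r ^ 2 -
      a * (Hw r - Hz r) ^ 2 / (Hw r * Hz r ^ 2)) (Ici s) :=
    ((continuousOn_const.mul ((hw.1.sub hz.1).sub (continuousOn_const.mul hK.1))).div
      (hz.1.pow 2) fun r hr => pow_ne_zero 2 (hz0 r hr)).sub
    ((continuousOn_const.mul ((hw.1.sub hz.1).pow 2)).div (hw.1.mul (hz.1.pow 2))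
      fun r hr => mul_ne_zero (hw0 r hr) (pow_ne_zero 2 (hz0 r hr)))
  have hbound : ∀ x ∈ Ico s t,
      ‖a * (Hw x - Hz x - (w - z) * K x) / Hz x ^ 2 - a * (Hw x - Hz x) ^ 2 / (Hw x * Hz x ^ 2)‖
        ≤ a / m ^ 2 * ‖Hw x - Hz x - (w - z) * K x‖ + 2 * a / m ^ 3 * M * ‖w - z‖ ^ 2 := by
    intro x hx
    have hHz : m ^ 2 ≤ ‖Hz x ^ 2‖ := by
      rw [norm_pow]
      exact pow_le_pow_left₀ hm.le (hz.im_le_norm ha hzpos x hx.1) 2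
    have hHwHz : m / 2 * m ^ 2 ≤ ‖Hw x * Hz x ^ 2‖ := by
      rw [norm_mul]
      exact mul_le_mul (hwz.trans (hw.im_le_norm ha hwpos x hx.1)) hHz (by positivity)
        (norm_nonneg _)
    calc _ ≤ a / m ^ 2 * ‖Hw x - Hz x - (w - z) * K x‖ +
          a / (m / 2 * m ^ 2) * ‖(Hw x - Hz x) ^ 2‖ :=
          (norm_sub_le _ _).trans (add_le_add
            (Complex.norm_ofReal_mul_div_le ha (by positivity) _ hHz)
            (Complex.norm_ofReal_mul_div_le ha (by positivity) _ hHwHz))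
      _ ≤ a / m ^ 2 * ‖Hw x - Hz x - (w - z) * K x‖ + a / (m / 2 * m ^ 2) * (M * ‖w - z‖ ^ 2) := by
          rw [norm_pow]
          gcongr
          exact hlipschitz x ⟨hx.1, hx.2.le⟩
      _ = _ := by field_simp
  simpa [gronwallBound_zero_mul] using norm_le_gronwallBound_of_eq_add_integral (c := 0) hcont
    (fun x hx => (hK.sub_sub_mul_eq_integral hw hz hw0 hz0 x hx).trans (zero_add _).symm)
    hbound t ⟨ht, le_rfl⟩

theorem IsLinearizedFlow.hasDerivAt (ha : 0 ≤ a) {H : ℂ → ℝ → ℂ}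
    (hH : ∀ w : ℂ, 0 < w.im → IsCBesselFlow a b s w (H w) ∧ ∀ r ∈ Ici s, 0 < (H w r).im)
    (hz : 0 < z.im) (hK : IsLinearizedFlow a s (H z) K) {t : ℝ} (ht : s ≤ t) :
    HasDerivAt (fun w => H w t) (K t) z := by
  obtain ⟨C, hC⟩ := hK.exists_norm_sub_sub_mul_le ha (hH z hz).1 (hH z hz).2 ht
  have hnear : ∀ᶠ w in 𝓝 z, z.im / 2 < w.im :=
    (Complex.continuous_im.tendsto z).eventually (lt_mem_nhds (half_lt_self hz))
  refine HasDerivAt.of_norm_sub_sub_le_sq (C := C) (hnear.mono fun w hw => ?_)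
  have hw_im : 0 < w.im := (half_pos hz).trans hw
  simpa only [smul_eq_mul] using hC w (H w) (hH w hw_im).1 (hH w hw_im).2 hw.le

end BesselFlow

theorem complex_bessel_flow_holomorphic_general
    (δ : ℝ) (hδ : δ < 0) (a : ℝ) (ha : a = (1 - δ) / 2)
    (b : ℝ → ℝ)
    (s : ℝ)
    (H : ℂ → ℝ → ℂ)
    (hH : ∀ z : ℂ, 0 < z.im → IsCBesselFlow a b s z (H z) ∧ ∀ r ∈ Set.Ici s, 0 < (H z r).im)
    (K : ℂ → ℝ → ℂ)
    (hK : ∀ z : ℂ, 0 < z.im → IsLinearizedFlow a s (H z) (K z)) :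
    ∀ t ∈ Set.Ici s,
      DifferentiableOn ℂ (fun w => H w t) {w : ℂ | 0 < w.im} ∧
      ∀ z : ℂ, 0 < z.im → HasDerivAt (fun w => H w t) (K z t) z := by
  have ha₀ : 0 ≤ a := by rw [ha]; linarith
  intro t ht
  have hderiv : ∀ z : ℂ, 0 < z.im → HasDerivAt (fun w => H w t) (K z t) z :=
    fun z hz => (hK z hz).hasDerivAt ha₀ hH hz ht
  exact ⟨fun w hw => (hderiv w hw).differentiableAt.differentiableWithinAt, hderiv⟩

/-- The map `z ↦ H(s,t,z)` is holomorphic on the upper half-plane, with complex derivative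
given by the solution `K(s,t,z)` of the linearized equation. -/
theorem complex_bessel_flow_holomorphic
    (δ : ℝ) (hδ : δ < 0) (a : ℝ) (ha : a = (1 - δ) / 2)
    (b : ℝ → ℝ) (hb : ContinuousOn b (Set.Ici (0 : ℝ)))
    (s : ℝ) (hs : 0 ≤ s)
    (H : ℂ → ℝ → ℂ)
    (hH : ∀ z : ℂ, 0 < z.im → IsCBesselFlow a b s z (H z) ∧ ∀ r ∈ Set.Ici s, 0 < (H z r).im)
    (K : ℂ → ℝ → ℂ)
    (hK : ∀ z : ℂ, 0 < z.im → IsLinearizedFlow a s (H z) (K z)) :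
    ∀ t ∈ Set.Ici s,
      DifferentiableOn ℂ (fun w => H w t) {w : ℂ | 0 < w.im} ∧
      ∀ z : ℂ, 0 < z.im → HasDerivAt (fun w => H w t) (K z t) z :=
  complex_bessel_flow_holomorphic_general δ hδ a ha b s H hH K hK
end
end

section
/- Let δ < 0 and a := (1−δ)/2, let b : [0,∞) → ℝ be continuous, let s ≥ 0 and x > 0. Then there exist a unique T ∈ (s, ∞] and a unique continuous function X : [s, T) → (0,∞) such that X_t = x + (b_t − b_s) − a ∫_s^t (1/X_r) dr for all t ∈ [s,T), and [s,T) is the maximal interval on which a positive continuous solution exists; moreover, if T < ∞ then X_t → 0 as t ↑ T. -/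
/-!
Away from `0` the drift `y ↦ -a / y` is Lipschitz, so the drift part `X - (b - b s)` of a solution
solves a Lipschitz ODE. Hence solutions on compact intervals `[s, u]` are unique, and a solution
that is at level `y > 0` at time `u` extends for a time that depends only on `y` and on the modulus
of continuity of `b`. The flow is glued from the solutions on the intervals `[s, u]`, `T` is the
supremum of such `u`, and the uniform extension time shows that near a finite `T` the flow cannot
stay above any `ε > 0`.
-/

open MeasureTheory Set Filter

noncomputable section

/-- `X` is a continuous positive solution on `[s,T)` of the integrated real Bessel equation
`X_t = x + (b_t − b_s) − a ∫_s^t (1/X_r) dr`, where `T ∈ (s,∞]` is an extended real. -/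
def IsRealBesselSol (a : ℝ) (b : ℝ → ℝ) (s x : ℝ) (T : EReal) (X : ℝ → ℝ) : Prop :=
  ContinuousOn X {t : ℝ | s ≤ t ∧ (t : EReal) < T} ∧
    ∀ t : ℝ, s ≤ t → (t : EReal) < T →
      0 < X t ∧ X t = x + (b t - b s) - a * ∫ r in s..t, (X r)⁻¹

open Metric Topology

theorem IsPicardLindelof.exists_continuous_forall_mem_closedBall_eq_picard
    {E : Type*} [NormedAddCommGroup E] [NormedSpace ℝ E] [CompleteSpace E]
    {f : ℝ → E → E} {tmin tmax : ℝ} {t₀ : Icc tmin tmax} {x₀ x : E} {a r L K : NNReal}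
    (hf : IsPicardLindelof f t₀ x₀ a r L K) (hx : x ∈ closedBall x₀ r) :
    ∃ α : ℝ → E, Continuous α ∧ (∀ t, α t ∈ closedBall x₀ a) ∧
      ∀ t ∈ Icc tmin tmax, α t = x + ∫ τ in t₀..t, f τ (α τ) := by
  obtain ⟨α, hα⟩ := ODE.FunSpace.exists_isFixedPt_next hf hx
  refine ⟨α.compProj, α.continuous_compProj, fun _ ↦ α.compProj_mem_closedBall hf.mul_max_le,
    fun t ht ↦ ?_⟩
  rw [ODE.FunSpace.compProj_of_mem ht]
  conv_lhs => rw [← hα]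
  rfl

lemma lipschitzOnWith_neg_mul_inv_add {a ε : ℝ} (ha : 0 ≤ a) (hε : 0 < ε) (c : ℝ) :
    LipschitzOnWith (a / ε ^ 2).toNNReal (fun y ↦ -(a * (y + c)⁻¹)) {y | ε ≤ y + c} := by
  refine LipschitzOnWith.of_dist_le_mul fun y hy z hz ↦ ?_
  have hy₀ : 0 < y + c := hε.trans_le hy
  have hz₀ : 0 < z + c := hε.trans_le hz
  have hε₂ : ε ^ 2 ≤ (y + c) * (z + c) := by
    nlinarith [show ε ≤ y + c from hy, show ε ≤ z + c from hz]
  rw [Real.dist_eq, Real.dist_eq, Real.coe_toNNReal _ (by positivity)]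
  calc |-(a * (y + c)⁻¹) - -(a * (z + c)⁻¹)| = a * |y - z| / ((y + c) * (z + c)) := by
        rw [show -(a * (y + c)⁻¹) - -(a * (z + c)⁻¹) = a * (y - z) / ((y + c) * (z + c)) by
          field_simp; ring, abs_div, abs_mul, abs_of_nonneg ha, abs_of_pos (mul_pos hy₀ hz₀)]
    _ ≤ a * |y - z| / ε ^ 2 := by gcongr
    _ = a / ε ^ 2 * |y - z| := by ring

lemma exists_pos_forall_abs_sub_le {b : ℝ → ℝ} {p q : ℝ} (hb : ContinuousOn b (Icc p (q + 1)))
    {η : ℝ} (hη : 0 < η) :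
    ∃ ρ ∈ Ioc (0 : ℝ) 1, ∀ t₀ ∈ Icc p q, ∀ t ∈ Icc t₀ (t₀ + ρ), |b t - b t₀| ≤ η := by
  obtain ⟨δ, hδ, hbδ⟩ := Metric.uniformContinuousOn_iff_le.1
    (isCompact_Icc.uniformContinuousOn_of_continuous hb) η hη
  refine ⟨min δ 1, ⟨lt_min hδ one_pos, min_le_right _ _⟩, fun t₀ ht₀ t ht ↦ ?_⟩
  have hρ := min_le_right δ 1
  have hρδ := min_le_left δ 1
  refine hbδ t ⟨ht₀.1.trans ht.1, by linarith [ht₀.2, ht.2]⟩ t₀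
    ⟨ht₀.1, by linarith [ht₀.2]⟩ ?_
  rw [Real.dist_eq, abs_of_nonneg (by linarith [ht.1])]
  linarith [ht.2]

lemma half_le_add_of_mem_closedBall {y₀ z β : ℝ} (hz : z ∈ closedBall y₀ (y₀ / 4))
    (hβ : |β| ≤ y₀ / 4) : y₀ / 2 ≤ z + β := by
  have hz' := abs_le.1 (Real.dist_eq z y₀ ▸ mem_closedBall.1 hz)
  linarith [(abs_le.1 hβ).1]

def IsRealBesselSolOn (a : ℝ) (b : ℝ → ℝ) (s x : ℝ) (I : Set ℝ) (X : ℝ → ℝ) : Prop :=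
  ContinuousOn X I ∧ ∀ t ∈ I, 0 < X t ∧ X t = x + (b t - b s) - a * ∫ r in s..t, (X r)⁻¹

section

variable {a : ℝ} {b : ℝ → ℝ} {s x u w : ℝ} {X Y : ℝ → ℝ}

namespace IsRealBesselSolOn

lemma mono {I J : Set ℝ} (h : IsRealBesselSolOn a b s x I X) (hJI : J ⊆ I) :
    IsRealBesselSolOn a b s x J X :=
  ⟨h.1.mono hJI, fun t ht ↦ h.2 t (hJI ht)⟩

lemma congr (h : IsRealBesselSolOn a b s x (Icc s u) X) (hXY : EqOn X Y (Icc s u)) :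
    IsRealBesselSolOn a b s x (Icc s u) Y := by
  refine ⟨h.1.congr hXY.symm, fun t ht ↦ ?_⟩
  have hint : ∫ r in s..t, (X r)⁻¹ = ∫ r in s..t, (Y r)⁻¹ :=
    intervalIntegral.integral_congr fun r hr ↦ by
      rw [uIcc_of_le ht.1] at hr
      rw [hXY ⟨hr.1, hr.2.trans ht.2⟩]
  rw [← hXY ht, ← hint]
  exact h.2 t ht

lemma apply_self (h : IsRealBesselSolOn a b s x (Icc s u) X) (hsu : s ≤ u) : X s = x := by
  simpa using (h.2 s ⟨le_rfl, hsu⟩).2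

lemma union_Icc (hsu : s ≤ u) (huw : u ≤ w) (h₁ : IsRealBesselSolOn a b s x (Icc s u) X)
    (h₂ : IsRealBesselSolOn a b u (X u) (Icc u w) X) : IsRealBesselSolOn a b s x (Icc s w) X := by
  have hcont : ContinuousOn X (Icc s w) :=
    Icc_union_Icc_eq_Icc hsu huw ▸ h₁.1.union_of_isClosed h₂.1 isClosed_Icc isClosed_Icc
  refine ⟨hcont, fun t ht ↦ ?_⟩
  rcases le_total t u with htu | hut
  · exact h₁.2 t ⟨ht.1, htu⟩
  obtain ⟨hpos, heq⟩ := h₂.2 t ⟨hut, ht.2⟩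
  have hinv : ContinuousOn (fun r ↦ (X r)⁻¹) (Icc s w) :=
    hcont.inv₀ fun r hr ↦ by
      rcases le_total r u with hru | hur
      · exact (h₁.2 r ⟨hr.1, hru⟩).1.ne'
      · exact (h₂.2 r ⟨hur, hr.2⟩).1.ne'
  have hsplit := intervalIntegral.integral_add_adjacent_intervals (μ := volume)
    (hinv.mono (uIcc_subset_Icc ⟨le_rfl, hsu.trans huw⟩ ⟨hsu, huw⟩)).intervalIntegrable
    (hinv.mono (uIcc_subset_Icc ⟨hsu, huw⟩ ht)).intervalIntegrable
  refine ⟨hpos, ?_⟩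
  rw [heq, (h₁.2 u ⟨hsu, le_rfl⟩).2, ← hsplit]
  ring

lemma exists_glue {X₁ X₂ : ℝ → ℝ} (hsu : s ≤ u) (huw : u ≤ w)
    (h₁ : IsRealBesselSolOn a b s x (Icc s u) X₁)
    (h₂ : IsRealBesselSolOn a b u (X₁ u) (Icc u w) X₂) :
    ∃ X, IsRealBesselSolOn a b s x (Icc s w) X := by
  classical
  set X := fun t ↦ if t ≤ u then X₁ t else X₂ t
  have hX₁ : EqOn X₁ X (Icc s u) := fun t ht ↦ (if_pos ht.2).symm
  have hX₂ : EqOn X₂ X (Icc u w) := fun t ht ↦ by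
    rcases ht.1.eq_or_lt with rfl | hut
    · simp [X, h₂.apply_self huw]
    · exact (if_neg (not_le.2 hut)).symm
  have hXu : X u = X₁ u := if_pos le_rfl
  exact ⟨X, (h₁.congr hX₁).union_Icc hsu huw (hXu ▸ h₂.congr hX₂)⟩

lemma hasDerivWithinAt_sub (h : IsRealBesselSolOn a b s x (Icc s u) X) {t : ℝ}
    (ht : t ∈ Icc s u) :
    HasDerivWithinAt (fun r ↦ X r - (b r - b s)) (-(a * (X t)⁻¹)) (Icc s u) t := by
  have hf : ContinuousOn (Function.uncurry fun (_ : ℝ) (y : ℝ) ↦ -(a * y⁻¹))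
      (Icc s u ×ˢ Ioi 0) :=
    (continuousOn_const.mul (continuousOn_snd.inv₀ fun p hp ↦ (mem_Ioi.1 hp.2).ne')).neg
  refine (ODE.hasDerivWithinAt_picard_Icc ⟨le_rfl, ht.1.trans ht.2⟩ hf h.1
    (fun r hr ↦ (h.2 r hr).1) x ht).congr_of_mem (fun r hr ↦ ?_) ht
  rw [ODE.picard_apply, intervalIntegral.integral_neg, intervalIntegral.integral_const_mul,
    (h.2 r hr).2]
  ring

lemma exists_pos_le (h : IsRealBesselSolOn a b s x (Icc s u) X) (hsu : s ≤ u) :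
    ∃ ε > 0, ∀ t ∈ Icc s u, ε ≤ X t := by
  obtain ⟨p, hp, hmin⟩ := isCompact_Icc.exists_isMinOn (nonempty_Icc.2 hsu) h.1
  exact ⟨X p, (h.2 p hp).1, fun t ht ↦ hmin ht⟩

/-- The drift `Z = X - (b - b s)` solves `Z' = -a / (Z + b - b s)`, whose right-hand side is
Lipschitz where `Z + b - b s = X` stays above the positive minimum of `X`. -/
lemma eqOn (ha : 0 ≤ a) (hsu : s ≤ u) (h₁ : IsRealBesselSolOn a b s x (Icc s u) X)
    (h₂ : IsRealBesselSolOn a b s x (Icc s u) Y) : EqOn X Y (Icc s u) := by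
  obtain ⟨ε₁, hε₁, hX⟩ := h₁.exists_pos_le hsu
  obtain ⟨ε₂, hε₂, hY⟩ := h₂.exists_pos_le hsu
  have hlip := fun t (_ : t ∈ Ico s u) ↦
    lipschitzOnWith_neg_mul_inv_add ha (lt_min hε₁ hε₂) (b t - b s)
  have hderiv {Z : ℝ → ℝ} (hZ : IsRealBesselSolOn a b s x (Icc s u) Z) (t : ℝ) (ht : t ∈ Ico s u) :
      HasDerivWithinAt (fun r ↦ Z r - (b r - b s))
        (-(a * (Z t - (b t - b s) + (b t - b s))⁻¹)) (Ici t) t := by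
    rw [sub_add_cancel]
    exact (hZ.hasDerivWithinAt_sub (Ico_subset_Icc_self ht)).mono_of_mem_nhdsWithin
      (Icc_mem_nhdsGE_of_mem ht)
  have hcont {Z : ℝ → ℝ} (hZ : IsRealBesselSolOn a b s x (Icc s u) Z) :
      ContinuousOn (fun r ↦ Z r - (b r - b s)) (Icc s u) :=
    fun t ht ↦ (hZ.hasDerivWithinAt_sub ht).continuousWithinAt
  have hdrift := ODE_solution_unique_of_mem_Icc_right hlip (hcont h₁) (hderiv h₁)
    (fun t ht ↦ show min ε₁ ε₂ ≤ X t - (b t - b s) + (b t - b s) by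
      rw [sub_add_cancel]; exact (min_le_left _ _).trans (hX t (Ico_subset_Icc_self ht)))
    (hcont h₂) (hderiv h₂)
    (fun t ht ↦ show min ε₁ ε₂ ≤ Y t - (b t - b s) + (b t - b s) by
      rw [sub_add_cancel]; exact (min_le_right _ _).trans (hY t (Ico_subset_Icc_self ht)))
    (by simp only [h₁.apply_self hsu, h₂.apply_self hsu])
  exact fun t ht ↦ sub_left_injective (hdrift ht)

end IsRealBesselSolOn

lemma isRealBesselSolOn_Icc_self (hx : 0 < x) :
    IsRealBesselSolOn a b s x (Icc s s) (fun _ ↦ x) :=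
  ⟨continuousOn_const, fun t ht ↦ by
    obtain rfl : t = s := le_antisymm ht.2 ht.1
    simp [hx]⟩

/-- On the ball of radius `y₀ / 4` around `y₀` the field has speed at most `2a / y₀`, since there
`z + (b t - b t₀) ≥ y₀ / 2`; so the ball is not left before time `y₀² / (8a)`. -/
lemma isPicardLindelof_neg_mul_inv_add_sub (ha : 0 < a) {t₀ y₀ τ : ℝ} (hy₀ : 0 < y₀)
    (hτ : 0 ≤ τ) (hτa : τ ≤ y₀ ^ 2 / (8 * a)) (hbc : ContinuousOn b (Icc t₀ (t₀ + τ)))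
    (hbτ : ∀ t ∈ Icc t₀ (t₀ + τ), |b t - b t₀| ≤ y₀ / 4) :
    IsPicardLindelof (tmin := t₀) (tmax := t₀ + τ)
      (fun t z ↦ -(a * (z + (b t - b t₀))⁻¹)) ⟨t₀, le_rfl, le_add_of_nonneg_right hτ⟩ y₀
      ⟨y₀ / 4, by positivity⟩ 0 ⟨2 * a / y₀, by positivity⟩ (a / (y₀ / 2) ^ 2).toNNReal where
  lipschitzOnWith t ht :=
    (lipschitzOnWith_neg_mul_inv_add ha.le (half_pos hy₀) _).mono fun z hz ↦
      half_le_add_of_mem_closedBall hz (hbτ t ht)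
  continuousOn z hz :=
    (continuousOn_const.mul
      ((continuousOn_const.add (hbc.sub continuousOn_const)).inv₀ fun t ht ↦
        ((half_pos hy₀).trans_le (half_le_add_of_mem_closedBall hz (hbτ t ht))).ne')).neg
  norm_le t ht z hz := by
    have hz₀ := half_le_add_of_mem_closedBall hz (hbτ t ht)
    change ‖-(a * (z + (b t - b t₀))⁻¹)‖ ≤ 2 * a / y₀
    rw [norm_neg, norm_mul, Real.norm_of_nonneg ha.le, norm_inv,
      Real.norm_of_nonneg (by linarith), ← div_eq_mul_inv, div_le_div_iff₀ (by linarith) hy₀]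
    nlinarith
  mul_max_le := by
    change 2 * a / y₀ * max (t₀ + τ - t₀) (t₀ - t₀) ≤ y₀ / 4 - 0
    rw [add_sub_cancel_left, sub_self, max_eq_left hτ, sub_zero]
    calc 2 * a / y₀ * τ ≤ 2 * a / y₀ * (y₀ ^ 2 / (8 * a)) := by gcongr
      _ = y₀ / 4 := by field_simp; ring

theorem exists_isRealBesselSolOn_Icc_add_min (ha : 0 < a) {t₀ y₀ ρ : ℝ} (hy₀ : 0 < y₀)
    (hρ : 0 < ρ) (hbc : ContinuousOn b (Icc t₀ (t₀ + ρ)))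
    (hbρ : ∀ t ∈ Icc t₀ (t₀ + ρ), |b t - b t₀| ≤ y₀ / 4) :
    ∃ X, IsRealBesselSolOn a b t₀ y₀ (Icc t₀ (t₀ + min ρ (y₀ ^ 2 / (8 * a)))) X := by
  set τ := min ρ (y₀ ^ 2 / (8 * a))
  have hτρ : Icc t₀ (t₀ + τ) ⊆ Icc t₀ (t₀ + ρ) :=
    Icc_subset_Icc_right (by linarith [min_le_left ρ (y₀ ^ 2 / (8 * a))])
  have hpl := isPicardLindelof_neg_mul_inv_add_sub ha hy₀ (lt_min hρ (by positivity)).le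
    (min_le_right _ _) (hbc.mono hτρ) fun t ht ↦ hbρ t (hτρ ht)
  obtain ⟨Z, hZc, hZball, hZ⟩ :=
    hpl.exists_continuous_forall_mem_closedBall_eq_picard (mem_closedBall_self le_rfl)
  have hpos : ∀ t ∈ Icc t₀ (t₀ + τ), 0 < Z t + (b t - b t₀) := fun t ht ↦
    (half_pos hy₀).trans_le (half_le_add_of_mem_closedBall (hZball t) (hbρ t (hτρ ht)))
  refine ⟨fun t ↦ Z t + (b t - b t₀),
    hZc.continuousOn.add ((hbc.mono hτρ).sub continuousOn_const), fun t ht ↦ ⟨hpos t ht, ?_⟩⟩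
  simp only [hZ t ht, intervalIntegral.integral_neg, intervalIntegral.integral_const_mul]
  ring

namespace IsRealBesselSolOn

lemma exists_Icc_add_min (ha : 0 < a) (hsu : s ≤ u) (h : IsRealBesselSolOn a b s x (Icc s u) X)
    {ρ : ℝ} (hρ : 0 < ρ) (hbc : ContinuousOn b (Icc u (u + ρ)))
    (hbρ : ∀ t ∈ Icc u (u + ρ), |b t - b u| ≤ X u / 4) :
    ∃ Y, IsRealBesselSolOn a b s x (Icc s (u + min ρ (X u ^ 2 / (8 * a)))) Y := by
  have hXu : 0 < X u := (h.2 u ⟨hsu, le_rfl⟩).1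
  obtain ⟨X₂, hX₂⟩ := exists_isRealBesselSolOn_Icc_add_min ha hXu hρ hbc hbρ
  exact h.exists_glue hsu (le_add_of_nonneg_right (lt_min hρ (by positivity)).le) hX₂

end IsRealBesselSolOn

lemma IsRealBesselSol.isRealBesselSolOn_Icc {T : EReal} (h : IsRealBesselSol a b s x T X)
    {u : ℝ} (hu : (u : EReal) < T) : IsRealBesselSolOn a b s x (Icc s u) X := by
  have hsub : ∀ t ∈ Icc s u, s ≤ t ∧ (t : EReal) < T :=
    fun t ht ↦ ⟨ht.1, (EReal.coe_le_coe_iff.2 ht.2).trans_lt hu⟩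
  exact ⟨h.1.mono hsub, fun t ht ↦ h.2 t (hsub t ht).1 (hsub t ht).2⟩

variable (a b s x)

def besselExistenceSet : Set ℝ := {u | ∃ X, IsRealBesselSolOn a b s x (Icc s u) X}

def besselHittingTime : EReal := ⨆ u ∈ besselExistenceSet a b s x, (u : EReal)

open Classical in
/-- Determined on `[s, besselHittingTime a b s x)` by uniqueness (`besselFlow_eqOn`); its values
elsewhere are junk. -/
def besselFlow (t : ℝ) : ℝ :=
  if h : ∃ X, IsRealBesselSolOn a b s x (Icc s t) X then h.choose t else 0

variable {a b s x}

lemma le_besselHittingTime (hu : u ∈ besselExistenceSet a b s x) :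
    (u : EReal) ≤ besselHittingTime a b s x :=
  le_biSup (fun u : ℝ ↦ (u : EReal)) hu

lemma lt_besselHittingTime_iff {t : ℝ} : (t : EReal) < besselHittingTime a b s x ↔
    ∃ u ∈ besselExistenceSet a b s x, t < u := by
  simp only [besselHittingTime, lt_biSup_iff, EReal.coe_lt_coe_iff]

lemma besselFlow_eqOn (ha : 0 ≤ a) (h : IsRealBesselSolOn a b s x (Icc s u) X) :
    EqOn (besselFlow a b s x) X (Icc s u) := by
  intro t ht
  have hex : ∃ X, IsRealBesselSolOn a b s x (Icc s t) X := ⟨X, h.mono (Icc_subset_Icc_right ht.2)⟩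
  rw [besselFlow, dif_pos hex]
  exact hex.choose_spec.eqOn ha ht.1 (h.mono (Icc_subset_Icc_right ht.2)) ⟨ht.1, le_rfl⟩

lemma isRealBesselSol_besselFlow (ha : 0 ≤ a) :
    IsRealBesselSol a b s x (besselHittingTime a b s x) (besselFlow a b s x) := by
  have hloc : ∀ t, s ≤ t → (t : EReal) < besselHittingTime a b s x →
      ∃ u, t < u ∧ IsRealBesselSolOn a b s x (Icc s u) (besselFlow a b s x) := by
    intro t hst ht
    obtain ⟨u, ⟨X, hX⟩, htu⟩ := lt_besselHittingTime_iff.1 ht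
    exact ⟨u, htu, hX.congr (besselFlow_eqOn ha hX).symm⟩
  refine ⟨fun t ht ↦ ?_, fun t hst ht ↦ ?_⟩
  · obtain ⟨u, htu, hu⟩ := hloc t ht.1 ht.2
    exact (hu.1 t ⟨ht.1, htu.le⟩).mono_of_mem_nhdsWithin
      (mem_nhdsWithin.2 ⟨Iio u, isOpen_Iio, htu, fun r hr ↦ ⟨hr.2.1, le_of_lt hr.1⟩⟩)
  · obtain ⟨u, htu, hu⟩ := hloc t hst ht
    exact hu.2 t ⟨hst, htu.le⟩

lemma le_besselHittingTime_of_isRealBesselSol {T : EReal} (h : IsRealBesselSol a b s x T X) :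
    T ≤ besselHittingTime a b s x :=
  EReal.ge_of_forall_gt_iff_ge.1 fun _ hu ↦
    le_besselHittingTime ⟨X, h.isRealBesselSolOn_Icc hu⟩

lemma eq_besselFlow_of_isRealBesselSol (ha : 0 ≤ a) {T : EReal} (h : IsRealBesselSol a b s x T X)
    {t : ℝ} (hst : s ≤ t) (ht : (t : EReal) < T) : X t = besselFlow a b s x t :=
  (besselFlow_eqOn ha (h.isRealBesselSolOn_Icc ht) ⟨hst, le_rfl⟩).symm

lemma coe_lt_besselHittingTime (ha : 0 < a) (hb : ContinuousOn b (Ici 0)) (hs : 0 ≤ s)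
    (hx : 0 < x) : (s : EReal) < besselHittingTime a b s x := by
  obtain ⟨ρ, hρ, hbρ⟩ := exists_pos_forall_abs_sub_le (p := s) (q := s)
    (hb.mono fun r hr ↦ hs.trans hr.1) (by positivity : 0 < x / 4)
  obtain ⟨X, hX⟩ := (isRealBesselSolOn_Icc_self hx).exists_Icc_add_min ha le_rfl hρ.1
    (hb.mono fun r hr ↦ hs.trans hr.1) (hbρ s ⟨le_rfl, le_rfl⟩)
  refine lt_besselHittingTime_iff.2 ⟨_, ⟨X, hX⟩, ?_⟩
  have : 0 < min ρ (x ^ 2 / (8 * a)) := lt_min hρ.1 (by positivity)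
  linarith

/-- Near a finite hitting time the flow is small: from a time `t` at which `X t ≥ ε`, the solution
extends by at least `min ρ (ε² / (8a))`, where `ρ` comes from the uniform continuity of `b`. -/
lemma tendsto_besselFlow_nhdsLT (ha : 0 < a) (hb : ContinuousOn b (Ici 0)) (hs : 0 ≤ s)
    (hx : 0 < x) {T : ℝ} (hT : besselHittingTime a b s x = T) :
    Tendsto (besselFlow a b s x) (𝓝[<] T) (𝓝 0) := by
  have hsT : s < T := EReal.coe_lt_coe_iff.1 (hT ▸ coe_lt_besselHittingTime ha hb hs hx)
  have hlt {t : ℝ} (ht : t < T) : (t : EReal) < besselHittingTime a b s x := by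
    rw [hT]; exact EReal.coe_lt_coe_iff.2 ht
  have hsol := isRealBesselSol_besselFlow (a := a) (b := b) (s := s) (x := x) ha.le
  refine tendsto_order.2 ⟨fun c hc ↦ ?_, fun ε hε ↦ ?_⟩
  · filter_upwards [Ioo_mem_nhdsLT hsT] with t ht
    exact hc.trans (hsol.2 t ht.1.le (hlt ht.2)).1
  obtain ⟨ρ, hρ, hbρ⟩ := exists_pos_forall_abs_sub_le (p := s) (q := T)
    (hb.mono fun r hr ↦ hs.trans hr.1) (by positivity : 0 < ε / 4)
  set d := min ρ (ε ^ 2 / (8 * a))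
  have hd : 0 < d := lt_min hρ.1 (by positivity)
  filter_upwards [Ioo_mem_nhdsLT (max_lt hsT (by linarith : T - d < T))] with t ht
  have hst : s ≤ t := (le_max_left _ _).trans ht.1.le
  by_contra! hεt
  obtain ⟨Y, hY⟩ := (hsol.isRealBesselSolOn_Icc (hlt ht.2)).exists_Icc_add_min ha hst hρ.1
    (hb.mono fun r hr ↦ (hs.trans hst).trans hr.1)
    fun r hr ↦ (hbρ t ⟨hst, ht.2.le⟩ r hr).trans (by linarith)
  have hle := EReal.coe_le_coe_iff.1 (hT ▸ le_besselHittingTime ⟨Y, hY⟩)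
  have hdle : d ≤ min ρ (besselFlow a b s x t ^ 2 / (8 * a)) := by
    gcongr min ρ (?_ / _)
    exact pow_le_pow_left₀ hε.le hεt 2
  linarith [(le_max_right s (T - d)).trans_lt ht.1]

end

/-- For `δ < 0`, `a = (1−δ)/2`, continuous `b`, `s ≥ 0` and `x > 0`, there is a unique
`T ∈ (s,∞]` and a unique continuous positive solution `X` on `[s,T)` of the real Bessel
equation, `[s,T)` being the maximal interval of existence; if `T < ∞` then `X_t → 0` as
`t ↑ T`. -/
theorem real_bessel_flow_exists_unique
    (δ : ℝ) (hδ : δ < 0) (a : ℝ) (ha : a = (1 - δ) / 2)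
    (b : ℝ → ℝ) (hb : ContinuousOn b (Set.Ici (0 : ℝ)))
    (s : ℝ) (hs : 0 ≤ s) (x : ℝ) (hx : 0 < x) :
    ∃ (T : EReal) (X : ℝ → ℝ),
      (s : EReal) < T ∧ IsRealBesselSol a b s x T X ∧
      (∀ (T' : EReal) (X' : ℝ → ℝ), (s : EReal) < T' → IsRealBesselSol a b s x T' X' →
        T' ≤ T ∧ ∀ t : ℝ, s ≤ t → (t : EReal) < T' → X' t = X t) ∧
      (∀ Treal : ℝ, T = (Treal : EReal) →
        Tendsto X (nhdsWithin Treal (Set.Iio Treal)) (nhds 0)) := by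
  have ha₀ : 0 < a := by rw [ha]; linarith
  exact ⟨besselHittingTime a b s x, besselFlow a b s x, coe_lt_besselHittingTime ha₀ hb hs hx,
    isRealBesselSol_besselFlow ha₀.le,
    fun _ _ _ hX' ↦ ⟨le_besselHittingTime_of_isRealBesselSol hX',
      fun _ hst ht ↦ eq_besselFlow_of_isRealBesselSol ha₀.le hX' hst ht⟩,
    fun _ hT ↦ tendsto_besselFlow_nhdsLT ha₀ hb hs hx hT⟩
end
end

section
/- Let δ < 0 and a := (1−δ)/2, let b : [0,∞) → ℝ be continuous, let s ≥ 0, and for x > 0 let T^{s,x} ∈ (s,∞] denote the hitting time of 0 of the real Bessel flow started at x at time s. Then for every x > 0, the map y ↦ T^{s,y} is left-continuous at x; that is, lim_{y ↑ x} T^{s,y} = T^{s,x} (the limit exists by monotonicity, and the identity holds in the extended reals (s,∞]). -/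
open MeasureTheory Set Filter Topology

noncomputable section

/-- `X` is the maximal positive solution of the real Bessel equation started at `x` at time
`s`, with hitting time of zero `T`. -/
def IsMaxRealBesselSol (a : ℝ) (b : ℝ → ℝ) (s x : ℝ) (T : EReal) (X : ℝ → ℝ) : Prop :=
  (s : EReal) < T ∧ IsRealBesselSol a b s x T X ∧
    ∀ (T' : EReal) (X' : ℝ → ℝ), (s : EReal) < T' → IsRealBesselSol a b s x T' X' → T' ≤ T

/-!
Since `a ≥ 0`, two Bessel flows driven by the same `b` are strictly ordered by their starting
points (at a first crossing the drift integral would already have separated them), so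
`y ↦ T^{s,y}` is monotone and it remains to show `liminf_{y → x} T^{s,y} ≥ T^{s,x}`. On a compact
interval `[s, t₁]` below `T^{s,x}` the flow from `x` stays above some `m > 0`. Replacing `1/u` by
the bounded, globally Lipschitz `1/max(u, m/2)` turns the equation into one with a global
solution from every `y` (Picard–Lindelöf) depending continuously on `y` (Grönwall); for `y` close
to `x` this solution stays above `m/2` on `[s, t₁]`, hence solves the Bessel equation there, and
maximality gives `T^{s,y} ≥ t₁`. The same truncation, started at `x`, also extends any solution
bounded below on `[s, τ)` past `τ`, which is what the monotonicity argument needs.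
-/

open scoped NNReal

section DrivenEquation

variable {a : ℝ} {F g W W₁ W₂ : ℝ → ℝ} {s t₁ y y₁ y₂ : ℝ}

def IsDrivenSolOn (a : ℝ) (F g : ℝ → ℝ) (s t₁ y : ℝ) (W : ℝ → ℝ) : Prop :=
  ContinuousOn W (Icc s t₁) ∧ ∀ t ∈ Icc s t₁, W t = y + (g t - g s) - a * ∫ r in s..t, F (W r)

lemma lipschitzWith_drift {K : ℝ≥0} (hF : LipschitzWith K F) (a c : ℝ) :
    LipschitzWith (‖a‖₊ * K) fun z => -(a * F (z + c)) := by
  refine LipschitzWith.of_dist_le_mul fun z z' => ?_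
  have hFzz' := hF.dist_le_mul (z + c) (z' + c)
  rw [Real.dist_eq, Real.dist_eq, add_sub_add_right_eq_sub] at hFzz'
  rw [Real.dist_eq, show -(a * F (z + c)) - -(a * F (z' + c)) = -(a * (F (z + c) - F (z' + c)))
    by ring, abs_neg, abs_mul, NNReal.coe_mul, coe_nnnorm, Real.norm_eq_abs, mul_assoc]
  exact mul_le_mul_of_nonneg_left hFzz' (abs_nonneg a)

lemma hasDerivWithinAt_integral_Icc {φ : ℝ → ℝ} (hφ : ContinuousOn φ (Icc s t₁)) {t : ℝ}
    (ht : t ∈ Icc s t₁) :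
    HasDerivWithinAt (fun u => ∫ r in s..u, φ r) (φ t) (Icc s t₁) t := by
  have : Fact (t ∈ Icc s t₁) := ⟨ht⟩
  exact intervalIntegral.integral_hasDerivWithinAt_right
    ((hφ.mono (Icc_subset_Icc le_rfl ht.2)).intervalIntegrable_of_Icc ht.1)
    (hφ.stronglyMeasurableAtFilter_nhdsWithin measurableSet_Icc t) (hφ t ht)

lemma IsDrivenSolOn.hasDerivWithinAt_sub (hF : Continuous F) (hW : IsDrivenSolOn a F g s t₁ y W)
    {t : ℝ} (ht : t ∈ Icc s t₁) :
    HasDerivWithinAt (fun u => W u - g u) (-(a * F (W t))) (Icc s t₁) t := by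
  have hd := ((hasDerivWithinAt_integral_Icc (φ := fun r => F (W r))
    (hF.comp_continuousOn hW.1) ht).const_mul a).const_sub (y - g s)
  refine hd.congr (fun u hu => ?_) ?_
  · rw [hW.2 u hu]; ring
  · rw [hW.2 t ht]; ring

lemma IsDrivenSolOn.mono {t₂ : ℝ} (hW : IsDrivenSolOn a F g s t₁ y W) (h : t₂ ≤ t₁) :
    IsDrivenSolOn a F g s t₂ y W :=
  ⟨hW.1.mono (Icc_subset_Icc le_rfl h), fun t ht => hW.2 t ⟨ht.1, ht.2.trans h⟩⟩

lemma IsDrivenSolOn.apply_left (hW : IsDrivenSolOn a F g s t₁ y W) (hst : s ≤ t₁) : W s = y := by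
  simpa using hW.2 s (left_mem_Icc.2 hst)

lemma IsDrivenSolOn.abs_sub_le {K : ℝ≥0} (ha : 0 ≤ a) (hF : LipschitzWith K F)
    (h₁ : IsDrivenSolOn a F g s t₁ y₁ W₁) (h₂ : IsDrivenSolOn a F g s t₁ y₂ W₂) {t : ℝ}
    (ht : t ∈ Icc s t₁) :
    |W₁ t - W₂ t| ≤ |y₁ - y₂| * Real.exp (a * K * (t - s)) := by
  have hcont : ∀ {y W}, IsDrivenSolOn a F g s t₁ y W →
      ContinuousOn (fun u => W u - g u) (Icc s t₁) :=
    fun hW u hu => (hW.hasDerivWithinAt_sub hF.continuous hu).continuousWithinAt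
  have hderiv : ∀ {y W}, IsDrivenSolOn a F g s t₁ y W → ∀ u ∈ Ico s t₁,
      HasDerivWithinAt (fun u => W u - g u) (-(a * F ((W u - g u) + g u))) (Ici u) u := by
    intro y W hW u hu
    rw [sub_add_cancel]
    exact (hW.hasDerivWithinAt_sub hF.continuous (Ico_subset_Icc_self hu)).mono_of_mem_nhdsWithin
      (Icc_mem_nhdsGE_of_mem hu)
  have hst : s ≤ t₁ := ht.1.trans ht.2
  have hgr := dist_le_of_trajectories_ODE (v := fun u z => -(a * F (z + g u)))
    (fun u => lipschitzWith_drift hF a (g u)) (hcont h₁) (hderiv h₁) (hcont h₂) (hderiv h₂)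
    (δ := |y₁ - y₂|) (by rw [h₁.apply_left hst, h₂.apply_left hst, Real.dist_eq]; simp) t ht
  rwa [Real.dist_eq, sub_sub_sub_cancel_right, NNReal.coe_mul, coe_nnnorm, Real.norm_of_nonneg ha]
    at hgr

lemma exists_isDrivenSolOn {K : ℝ≥0} {C : ℝ} (hF : LipschitzWith K F) (hFC : ∀ u, |F u| ≤ C)
    (hg : ContinuousOn g (Icc s t₁)) (hst : s ≤ t₁) (a y : ℝ) :
    ∃ W, IsDrivenSolOn a F g s t₁ y W := by
  -- `W - g` solves the ODE `Z' = -a F(Z + g)`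
  set v : ℝ → ℝ → ℝ := fun u z => -(a * F (z + g u))
  have hC : 0 ≤ C := (abs_nonneg _).trans (hFC 0)
  set L : ℝ≥0 := ‖a‖₊ * ⟨C, hC⟩
  have hpl : IsPicardLindelof v (⟨s, left_mem_Icc.2 hst⟩ : Icc s t₁) (y - g s)
      (L * (t₁ - s).toNNReal) 0 L (‖a‖₊ * K) := by
    refine ⟨fun u _ => (lipschitzWith_drift hF a (g u)).lipschitzOnWith, fun z _ => ?_,
      fun u _ z _ => ?_, ?_⟩
    · exact ((hF.continuous.comp_continuousOn (continuousOn_const.add hg)).const_smul a).neg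
    · simp only [v, norm_neg, norm_mul]
      exact mul_le_mul_of_nonneg_left (hFC _) (norm_nonneg a)
    · simp [max_eq_left (sub_nonneg.2 hst), Real.coe_toNNReal _ (sub_nonneg.2 hst)]
  obtain ⟨Z, hZs, hZ⟩ := hpl.exists_eq_forall_mem_Icc_hasDerivWithinAt₀
  have hZc : ContinuousOn Z (Icc s t₁) := fun u hu => (hZ u hu).continuousWithinAt
  refine ⟨fun u => Z u + g u, hZc.add hg, fun t ht => ?_⟩
  have hsub : Icc s t ⊆ Icc s t₁ := Icc_subset_Icc le_rfl ht.2
  have hFTC : ∫ r in s..t, v r (Z r) = Z t - Z s :=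
    intervalIntegral.integral_eq_sub_of_hasDeriv_right_of_le ht.1 (hZc.mono hsub)
      (fun r hr => (hZ r (hsub (Ioo_subset_Icc_self hr))).mono_of_mem_nhdsWithin
        (Icc_mem_nhdsGT_of_mem ⟨hr.1.le, hr.2.trans_le ht.2⟩))
      (ContinuousOn.intervalIntegrable_of_Icc ht.1
        (((hF.continuous.comp_continuousOn ((hZc.add hg).mono hsub)).const_smul a).neg))
  simp only [v, intervalIntegral.integral_neg, intervalIntegral.integral_const_mul] at hFTC
  simp only at hZs
  linarith

end DrivenEquation

section Bessel

variable {a c : ℝ} {b X W : ℝ → ℝ} {s x y t₁ : ℝ} {T : EReal}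

def clampedInv (c u : ℝ) : ℝ := (max u c)⁻¹

lemma clampedInv_of_le {u : ℝ} (h : c ≤ u) : clampedInv c u = u⁻¹ := by
  rw [clampedInv, max_eq_left h]

lemma abs_clampedInv_le (hc : 0 < c) (u : ℝ) : |clampedInv c u| ≤ c⁻¹ := by
  rw [clampedInv, abs_inv, abs_of_pos (hc.trans_le (le_max_right u c))]
  exact inv_anti₀ hc (le_max_right u c)

lemma lipschitzWith_clampedInv (hc : 0 < c) :
    LipschitzWith ⟨(c ^ 2)⁻¹, by positivity⟩ (clampedInv c) := by
  refine LipschitzWith.of_dist_le_mul fun u v => ?_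
  have hu : 0 < max u c := hc.trans_le (le_max_right u c)
  have hv : 0 < max v c := hc.trans_le (le_max_right v c)
  have hprod : c ^ 2 ≤ max u c * max v c := by
    nlinarith [le_max_right u c, le_max_right v c]
  rw [clampedInv, clampedInv, Real.dist_eq, Real.dist_eq, inv_sub_inv hu.ne' hv.ne', abs_div,
    abs_of_pos (mul_pos hu hv), div_le_iff₀ (mul_pos hu hv)]
  calc |max v c - max u c| ≤ |u - v| := by
        rw [abs_sub_comm u v]; exact abs_max_sub_max_le_abs _ _ _
    _ = (c ^ 2)⁻¹ * |u - v| * c ^ 2 := by field_simp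
    _ ≤ (c ^ 2)⁻¹ * |u - v| * (max u c * max v c) := by gcongr

lemma IsRealBesselSol.mono {T' : EReal} (hX : IsRealBesselSol a b s x T X) (h : T' ≤ T) :
    IsRealBesselSol a b s x T' X :=
  ⟨hX.1.mono fun _ ht => ⟨ht.1, ht.2.trans_le h⟩, fun t hst ht => hX.2 t hst (ht.trans_le h)⟩

lemma IsRealBesselSol.of_mem_Icc (hX : IsRealBesselSol a b s x T X) (ht₁ : (t₁ : EReal) < T)
    {t : ℝ} (ht : t ∈ Icc s t₁) :
    0 < X t ∧ X t = x + (b t - b s) - a * ∫ r in s..t, (X r)⁻¹ :=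
  hX.2 t ht.1 ((EReal.coe_le_coe_iff.2 ht.2).trans_lt ht₁)

lemma IsRealBesselSol.continuousOn_Icc (hX : IsRealBesselSol a b s x T X)
    (ht₁ : (t₁ : EReal) < T) : ContinuousOn X (Icc s t₁) :=
  hX.1.mono fun _ ht => ⟨ht.1, (EReal.coe_le_coe_iff.2 ht.2).trans_lt ht₁⟩

lemma IsRealBesselSol.apply_left (hX : IsRealBesselSol a b s x T X) (hT : (s : EReal) < T) :
    X s = x := by
  simpa using (hX.of_mem_Icc hT (left_mem_Icc.2 le_rfl)).2

lemma IsRealBesselSol.intervalIntegrable_inv (hX : IsRealBesselSol a b s x T X) (hst : s ≤ t₁)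
    (ht₁ : (t₁ : EReal) < T) : IntervalIntegrable (fun r => (X r)⁻¹) volume s t₁ :=
  ((hX.continuousOn_Icc ht₁).inv₀ fun _ hr =>
    (hX.of_mem_Icc ht₁ hr).1.ne').intervalIntegrable_of_Icc hst

lemma IsRealBesselSol.exists_pos_le (hX : IsRealBesselSol a b s x T X) (hst : s ≤ t₁)
    (ht₁ : (t₁ : EReal) < T) : ∃ m > 0, ∀ t ∈ Icc s t₁, m ≤ X t := by
  obtain ⟨r, hr, hmin⟩ :=
    isCompact_Icc.exists_isMinOn (nonempty_Icc.2 hst) (hX.continuousOn_Icc ht₁)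
  exact ⟨X r, (hX.of_mem_Icc ht₁ hr).1, fun t ht => hmin ht⟩

lemma integral_clampedInv_eq {t : ℝ} (hst : s ≤ t) (hc : ∀ r ∈ Icc s t, c ≤ W r) :
    ∫ r in s..t, clampedInv c (W r) = ∫ r in s..t, (W r)⁻¹ :=
  intervalIntegral.integral_congr fun r hr =>
    clampedInv_of_le (hc r (by rwa [uIcc_of_le hst] at hr))

lemma IsRealBesselSol.isDrivenSolOn_clampedInv (hX : IsRealBesselSol a b s x T X)
    (ht₁ : (t₁ : EReal) < T) (hc : ∀ t ∈ Icc s t₁, c ≤ X t) :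
    IsDrivenSolOn a (clampedInv c) b s t₁ x X := by
  refine ⟨hX.continuousOn_Icc ht₁, fun t ht => ?_⟩
  rw [integral_clampedInv_eq ht.1 fun r hr => hc r (Icc_subset_Icc le_rfl ht.2 hr)]
  exact (hX.of_mem_Icc ht₁ ht).2

lemma IsDrivenSolOn.isRealBesselSol {t' : ℝ} (hc : 0 < c)
    (hW : IsDrivenSolOn a (clampedInv c) b s t₁ y W) (ht' : t' ≤ t₁)
    (hlow : ∀ t ∈ Ico s t', c ≤ W t) : IsRealBesselSol a b s y t' W := by
  have hsub : {t : ℝ | s ≤ t ∧ (t : EReal) < t'} ⊆ Ico s t' :=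
    fun t ht => ⟨ht.1, EReal.coe_lt_coe_iff.1 ht.2⟩
  refine ⟨hW.1.mono (hsub.trans (Ico_subset_Icc_self.trans (Icc_subset_Icc le_rfl ht'))),
    fun t hst ht => ?_⟩
  have ht : t ∈ Ico s t' := hsub ⟨hst, ht⟩
  refine ⟨hc.trans_le (hlow t ht), ?_⟩
  rw [hW.2 t ⟨hst, ht.2.le.trans ht'⟩,
    integral_clampedInv_eq hst fun r hr => hlow r ⟨hr.1, hr.2.trans_lt ht.2⟩]

lemma IsRealBesselSol.lt_of_lt {y₁ y₂ : ℝ} {X₁ X₂ : ℝ → ℝ} (ha : 0 ≤ a)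
    (h₁ : IsRealBesselSol a b s y₁ T X₁) (h₂ : IsRealBesselSol a b s y₂ T X₂) (hy : y₁ < y₂)
    {t : ℝ} (hst : s ≤ t) (ht : (t : EReal) < T) : X₁ t < X₂ t := by
  by_contra! hle
  have hS : IsCompact (Icc s t ∩ (fun r => X₂ r - X₁ r) ⁻¹' Iic 0) :=
    isCompact_Icc.of_isClosed_subset (((h₂.continuousOn_Icc ht).sub
      (h₁.continuousOn_Icc ht)).preimage_isClosed_of_isClosed isClosed_Icc isClosed_Iic)
      inter_subset_left
  obtain ⟨τ, ⟨hτ, hτle⟩, hleast⟩ := hS.exists_isLeast ⟨t, right_mem_Icc.2 hst, sub_nonpos.2 hle⟩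
  have hτT : (τ : EReal) < T := (EReal.coe_le_coe_iff.2 hτ.2).trans_lt ht
  have hbefore : ∀ r ∈ Ico s τ, X₁ r < X₂ r := fun r hr => by
    by_contra! h
    exact hr.2.not_ge (hleast ⟨⟨hr.1, hr.2.le.trans hτ.2⟩, sub_nonpos.2 h⟩)
  have hsτ : s < τ := by
    refine hτ.1.lt_of_ne fun hsτ => ?_
    subst hsτ
    have : X₂ s - X₁ s ≤ 0 := hτle
    rw [h₁.apply_left hτT, h₂.apply_left hτT] at this
    linarith
  have hpos : 0 < ∫ r in s..τ, ((X₁ r)⁻¹ - (X₂ r)⁻¹) :=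
    intervalIntegral.intervalIntegral_pos_of_pos_on
      ((h₁.intervalIntegrable_inv hτ.1 hτT).sub (h₂.intervalIntegrable_inv hτ.1 hτT))
      (fun r hr => sub_pos.2 (inv_strictAnti₀ (h₁.of_mem_Icc hτT ⟨hr.1.le, hr.2.le⟩).1
        (hbefore r ⟨hr.1.le, hr.2⟩))) hsτ
  rw [intervalIntegral.integral_sub (h₁.intervalIntegrable_inv hτ.1 hτT)
    (h₂.intervalIntegrable_inv hτ.1 hτT)] at hpos
  have hτle : X₂ τ - X₁ τ ≤ 0 := hτle
  rw [(h₁.of_mem_Icc hτT (right_mem_Icc.2 hτ.1)).2, (h₂.of_mem_Icc hτT (right_mem_Icc.2 hτ.1)).2]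
    at hτle
  linarith [mul_nonneg ha hpos.le]

lemma IsRealBesselSol.eventually_exists_isRealBesselSol (ha : 0 ≤ a)
    (hb : ContinuousOn b (Icc s t₁))
    (hX : IsRealBesselSol a b s x T X) (hst : s ≤ t₁) (ht₁ : (t₁ : EReal) < T) :
    ∀ᶠ y in 𝓝 x, ∃ W, IsRealBesselSol a b s y t₁ W := by
  obtain ⟨m, hm, hmX⟩ := hX.exists_pos_le hst ht₁
  have hc : 0 < m / 2 := half_pos hm
  have hXc := hX.isDrivenSolOn_clampedInv ht₁ fun t ht => (half_le_self hm.le).trans (hmX t ht)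
  set E := Real.exp (a * ((m / 2) ^ 2)⁻¹ * (t₁ - s))
  have hE : 0 < E := Real.exp_pos _
  filter_upwards [Metric.ball_mem_nhds x (div_pos hc hE)] with y hy
  obtain ⟨W, hW⟩ := exists_isDrivenSolOn (lipschitzWith_clampedInv hc) (abs_clampedInv_le hc) hb
    hst a y
  refine ⟨W, hW.isRealBesselSol hc le_rfl fun t ht => ?_⟩
  have ht' : t ∈ Icc s t₁ := Ico_subset_Icc_self ht
  have hgrowth : Real.exp (a * ((m / 2) ^ 2)⁻¹ * (t - s)) ≤ E :=
    Real.exp_le_exp.2 (mul_le_mul_of_nonneg_left (sub_le_sub_right ht'.2 s)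
      (mul_nonneg ha (by positivity)))
  have hclose : |X t - W t| < m / 2 := by
    calc |X t - W t| ≤ |x - y| * Real.exp (a * ((m / 2) ^ 2)⁻¹ * (t - s)) :=
          hXc.abs_sub_le ha (lipschitzWith_clampedInv hc) hW ht'
      _ ≤ |x - y| * E := by gcongr
      _ < m / 2 / E * E := by
          gcongr; rwa [abs_sub_comm, ← Real.dist_eq]
      _ = m / 2 := div_mul_cancel₀ _ hE.ne'
  linarith [hmX t ht', (abs_lt.1 hclose).2]

lemma IsRealBesselSol.exists_isRealBesselSol_beyond {τ m : ℝ} (ha : 0 ≤ a)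
    (hb : ContinuousOn b (Icc s (τ + 1)))
    (hX : IsRealBesselSol a b s x τ X) (hsτ : s < τ) (hm : 0 < m)
    (hmX : ∀ t ∈ Ico s τ, m ≤ X t) : ∃ τ' > τ, ∃ W, IsRealBesselSol a b s x τ' W := by
  have hc : 0 < m / 2 := half_pos hm
  obtain ⟨W, hW⟩ := exists_isDrivenSolOn (lipschitzWith_clampedInv hc) (abs_clampedInv_le hc) hb
    (by linarith) a x
  have hWX : ∀ t ∈ Ico s τ, W t = X t := by
    intro t ht
    have hXt := hX.isDrivenSolOn_clampedInv (EReal.coe_lt_coe_iff.2 ht.2) fun r hr =>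
      (half_le_self hm.le).trans (hmX r ⟨hr.1, hr.2.trans_lt ht.2⟩)
    have := (hW.mono (by linarith [ht.2])).abs_sub_le ha (lipschitzWith_clampedInv hc) hXt
      (right_mem_Icc.2 ht.1)
    simpa [sub_eq_zero] using this
  have hWc : ContinuousWithinAt W (Icc s (τ + 1)) τ := hW.1 τ ⟨hsτ.le, by linarith⟩
  have hWτ : m ≤ W τ :=
    ge_of_tendsto (hWc.mono_of_mem_nhdsWithin (Icc_mem_nhdsLT_of_mem ⟨hsτ, by linarith⟩))
      (by filter_upwards [Ioo_mem_nhdsLT hsτ] with t ht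
          exact (hmX t ⟨ht.1.le, ht.2⟩).trans_eq (hWX t ⟨ht.1.le, ht.2⟩).symm)
  obtain ⟨u, hτu, hu⟩ := mem_nhdsGE_iff_exists_Ico_subset.1
    ((hWc.mono_of_mem_nhdsWithin (Icc_mem_nhdsGE_of_mem ⟨hsτ.le, by linarith⟩)).eventually
      (eventually_gt_nhds (show m / 2 < W τ by linarith)))
  refine ⟨min u (τ + 1), lt_min hτu (by linarith), W, hW.isRealBesselSol hc (min_le_right _ _) ?_⟩
  intro t ht
  rcases lt_or_ge t τ with htτ | hτt
  · exact (half_le_self hm.le).trans ((hmX t ⟨ht.1, htτ⟩).trans_eq (hWX t ⟨ht.1, htτ⟩).symm)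
  · exact (hu ⟨hτt, ht.2.trans_le (min_le_left _ _)⟩).le

lemma IsMaxRealBesselSol.le_of_lt {Tx Ty : EReal} {Y : ℝ → ℝ} (ha : 0 ≤ a)
    (hb : ContinuousOn b (Ici s)) (hY : IsMaxRealBesselSol a b s y Ty Y)
    (hX : IsMaxRealBesselSol a b s x Tx X) (hyx : y < x) : Ty ≤ Tx := by
  by_contra! hT
  obtain ⟨τ, rfl⟩ : ∃ τ : ℝ, (τ : EReal) = Tx :=
    ⟨Tx.toReal, EReal.coe_toReal (ne_top_of_lt hT) (ne_bot_of_gt hX.1)⟩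
  have hsτ : s < τ := EReal.coe_lt_coe_iff.1 hX.1
  obtain ⟨m, hm, hmY⟩ := hY.2.1.exists_pos_le hsτ.le hT
  have hYX : ∀ t ∈ Ico s τ, Y t < X t := fun t ht =>
    (hY.2.1.mono hT.le).lt_of_lt ha hX.2.1 hyx ht.1 (EReal.coe_lt_coe_iff.2 ht.2)
  obtain ⟨τ', hττ', W, hW⟩ :=
    hX.2.1.exists_isRealBesselSol_beyond ha (hb.mono Icc_subset_Ici_self) hsτ hm fun t ht => (hmY t ⟨ht.1, ht.2.le⟩).trans (hYX t ht).le
  exact (EReal.coe_lt_coe_iff.2 hττ').not_ge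
    (hX.2.2 τ' W (EReal.coe_lt_coe_iff.2 (hsτ.trans hττ')) hW)

lemma lowerSemicontinuousAt_of_isMaxRealBesselSol {T : ℝ → EReal} {X : ℝ → ℝ → ℝ} (ha : 0 ≤ a)
    (hb : ContinuousOn b (Ici s)) (hflow : ∀ y, 0 < y → IsMaxRealBesselSol a b s y (T y) (X y))
    (hx : 0 < x) : LowerSemicontinuousAt T x := by
  intro c hc
  obtain ⟨t₁, hct₁, ht₁⟩ := EReal.lt_iff_exists_real_btwn.1 (max_lt hc (hflow x hx).1)
  have hst₁ : s < t₁ := EReal.coe_lt_coe_iff.1 ((le_max_right _ _).trans_lt hct₁)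
  filter_upwards [(hflow x hx).2.1.eventually_exists_isRealBesselSol ha
    (hb.mono Icc_subset_Ici_self) hst₁.le ht₁, eventually_gt_nhds hx] with y ⟨W, hW⟩ hy
  exact ((le_max_left _ _).trans_lt hct₁).trans_le
    ((hflow y hy).2.2 t₁ W (EReal.coe_lt_coe_iff.2 hst₁) hW)

end Bessel

/-- Left continuity of the hitting time of `0` of the real Bessel flow in the starting
point: `T^{s,y} → T^{s,x}` as `y ↑ x`, in the extended reals. -/
theorem real_bessel_hitting_time_left_continuous
    (δ : ℝ) (hδ : δ < 0) (a : ℝ) (ha : a = (1 - δ) / 2)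
    (b : ℝ → ℝ) (hb : ContinuousOn b (Set.Ici (0 : ℝ)))
    (s : ℝ) (hs : 0 ≤ s)
    (T : ℝ → EReal) (X : ℝ → ℝ → ℝ)
    (hflow : ∀ y : ℝ, 0 < y → IsMaxRealBesselSol a b s y (T y) (X y))
    (x : ℝ) (hx : 0 < x) :
    Tendsto T (𝓝[<] x) (𝓝 (T x)) := by
  have ha₀ : 0 ≤ a := by rw [ha]; linarith
  have hb' : ContinuousOn b (Ici s) := hb.mono (Ici_subset_Ici.2 hs)
  refine tendsto_order.2 ⟨fun c hc => ?_, fun c hc => ?_⟩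
  · exact (lowerSemicontinuousAt_of_isMaxRealBesselSol ha₀ hb' hflow hx c hc).filter_mono
      nhdsWithin_le_nhds
  · filter_upwards [Ioo_mem_nhdsLT hx] with y hy
    exact ((hflow y hy.1).le_of_lt ha₀ hb' (hflow x hx) hy.2).trans_lt hc
end
end
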